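/- arXiv:math/9912126 — 2 statements merged into one kernel-verified Lean document; each statement's English description precedes it below -/
import Mathlib

section
/- Let C = {C_1,...,C_l} be a chain family and A = {A_1,...,A_k} an antichain family in a finite poset P. Then C and A are orthogonal if and only if: (1) C covers c_l(P) elements, (2) A covers a_k(P) elements, and (3) c_l(P) + a_k(P) = n + kl, where n = |P|. -/
/-!
A chain meets an antichain in at most one element, and inclusion–exclusion gives
`|⋃ C| + |⋃ A| = |⋃ C ∪ ⋃ A| + ∑ᵢⱼ |Cᵢ ∩ Aⱼ| ≤ n + kl`, with equality exactly when `C` and `A`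
together cover `P` and every `Cᵢ` meets every `Aⱼ`, i.e. when they are orthogonal. Since the
maximal values `c_l` and `a_k` are attained by some families, also `c_l + a_k ≤ n + kl`.
Hence `|⋃ C| + |⋃ A| = n + kl` holds iff `|⋃ C| = c_l`, `|⋃ A| = a_k` and `c_l + a_k = n + kl`.
-/

open Finset

/-- `cMax α k` is the maximal cardinality of a union of `k` pairwise disjoint chains
in the finite poset `α`. -/
noncomputable def cMax (α : Type*) [PartialOrder α] [Fintype α] [DecidableEq α] (k : ℕ) : ℕ :=
  sSup {n : ℕ | ∃ f : Fin k → Finset α,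
    (∀ i, IsChain (· ≤ ·) (↑(f i) : Set α)) ∧
    Pairwise (Function.onFun Disjoint f) ∧
    n = (Finset.univ.biUnion f).card}

/-- `aMax α k` is the maximal cardinality of a union of `k` pairwise disjoint antichains
in the finite poset `α`. -/
noncomputable def aMax (α : Type*) [PartialOrder α] [Fintype α] [DecidableEq α] (k : ℕ) : ℕ :=
  sSup {n : ℕ | ∃ f : Fin k → Finset α,
    (∀ i, IsAntichain (· ≤ ·) (↑(f i) : Set α)) ∧
    Pairwise (Function.onFun Disjoint f) ∧
    n = (Finset.univ.biUnion f).card}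

/-- The `k`-th row length of the Greene shape `λ(α)`. -/
noncomputable def lam (α : Type*) [PartialOrder α] [Fintype α] [DecidableEq α] (k : ℕ) : ℕ :=
  cMax α k - cMax α (k - 1)

/-- The `k`-th column length of the Greene shape, `μ_k = a_k - a_{k-1}`. -/
noncomputable def mu (α : Type*) [PartialOrder α] [Fintype α] [DecidableEq α] (k : ℕ) : ℕ :=
  aMax α k - aMax α (k - 1)

section DisjointFamilies

variable {α ι κ : Type*} [DecidableEq α] [Fintype ι] [Fintype κ]

theorem card_biUnion_inter_biUnion (s : ι → Finset α) (t : κ → Finset α)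
    (hs : Pairwise (Function.onFun Disjoint s)) (ht : Pairwise (Function.onFun Disjoint t)) :
    #(univ.biUnion s ∩ univ.biUnion t) = ∑ p : ι × κ, #(s p.1 ∩ t p.2) := by
  have hunion :
      univ.biUnion s ∩ univ.biUnion t = univ.biUnion fun p : ι × κ ↦ s p.1 ∩ t p.2 := by
    ext a
    simp only [mem_inter, mem_biUnion, mem_univ, true_and, Prod.exists]
    tauto
  rw [hunion, card_biUnion]
  rintro ⟨i, j⟩ - ⟨i', j'⟩ - hne
  by_cases hi : i = i'
  · have hj : j ≠ j' := fun hj ↦ hne (by rw [hi, hj])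
    exact (ht hj).mono inter_subset_right inter_subset_right
  · exact (hs hi).mono inter_subset_left inter_subset_left

end DisjointFamilies

theorem card_inter_le_one_of_isChain_of_isAntichain {α : Type*} [DecidableEq α]
    {r : α → α → Prop} {s t : Finset α} (hs : IsChain r (s : Set α))
    (ht : IsAntichain r (t : Set α)) : #(s ∩ t) ≤ 1 :=
  card_le_one_iff_subsingleton.2 (by simpa using inter_subsingleton_of_isChain_of_isAntichain hs ht)

section Orthogonal

variable {α ι κ : Type*} [DecidableEq α] [Fintype ι] [Fintype κ] {r : α → α → Prop}
  {C : ι → Finset α} {A : κ → Finset α}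

theorem sum_card_inter_le (hC : ∀ i, IsChain r (C i : Set α))
    (hA : ∀ j, IsAntichain r (A j : Set α)) :
    ∑ p : ι × κ, #(C p.1 ∩ A p.2) ≤ Fintype.card (ι × κ) :=
  (sum_le_card_nsmul _ _ 1 fun p _ ↦
    card_inter_le_one_of_isChain_of_isAntichain (hC p.1) (hA p.2)).trans_eq (by simp)

theorem sum_card_inter_eq_iff (hC : ∀ i, IsChain r (C i : Set α))
    (hA : ∀ j, IsAntichain r (A j : Set α)) :
    ∑ p : ι × κ, #(C p.1 ∩ A p.2) = Fintype.card (ι × κ) ↔ ∀ i j, (C i ∩ A j).Nonempty := by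
  rw [← card_univ, card_eq_sum_ones, sum_eq_sum_iff_of_le fun p _ ↦
    card_inter_le_one_of_isChain_of_isAntichain (hC p.1) (hA p.2)]
  simp only [mem_univ, forall_const, Prod.forall]
  refine forall₂_congr fun i j ↦ ⟨fun h ↦ card_pos.1 (by omega), fun h ↦ ?_⟩
  exact le_antisymm (card_inter_le_one_of_isChain_of_isAntichain (hC i) (hA j)) (card_pos.2 h)

variable [Fintype α]

def IsOrthogonal (C : ι → Finset α) (A : κ → Finset α) : Prop :=
  univ.biUnion C ∪ univ.biUnion A = univ ∧ ∀ i j, (C i ∩ A j).Nonempty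

theorem card_biUnion_add_card_biUnion_le (hC : ∀ i, IsChain r (C i : Set α))
    (hCd : Pairwise (Function.onFun Disjoint C)) (hA : ∀ j, IsAntichain r (A j : Set α))
    (hAd : Pairwise (Function.onFun Disjoint A)) :
    #(univ.biUnion C) + #(univ.biUnion A) ≤ Fintype.card α + Fintype.card (ι × κ) := by
  rw [← card_union_add_card_inter, card_biUnion_inter_biUnion C A hCd hAd]
  exact add_le_add (card_le_univ _) (sum_card_inter_le hC hA)

theorem isOrthogonal_iff_card_biUnion_add_card_biUnion_eq
    (hC : ∀ i, IsChain r (C i : Set α)) (hCd : Pairwise (Function.onFun Disjoint C))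
    (hA : ∀ j, IsAntichain r (A j : Set α)) (hAd : Pairwise (Function.onFun Disjoint A)) :
    IsOrthogonal C A ↔
      #(univ.biUnion C) + #(univ.biUnion A) = Fintype.card α + Fintype.card (ι × κ) := by
  rw [IsOrthogonal, ← card_union_add_card_inter, card_biUnion_inter_biUnion C A hCd hAd,
    ← card_eq_iff_eq_univ, ← sum_card_inter_eq_iff hC hA]
  have := card_le_univ (univ.biUnion C ∪ univ.biUnion A)
  have := sum_card_inter_le hC hA
  omega

end Orthogonal

section DisjointUnionCards

variable {α : Type*} [Fintype α] [DecidableEq α]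

def disjointUnionCards (P : Finset α → Prop) (k : ℕ) : Set ℕ :=
  {n | ∃ f : Fin k → Finset α,
    (∀ i, P (f i)) ∧ Pairwise (Function.onFun Disjoint f) ∧ n = #(univ.biUnion f)}

variable {P : Finset α → Prop} {k : ℕ}

theorem bddAbove_disjointUnionCards : BddAbove (disjointUnionCards P k) :=
  ⟨Fintype.card α, fun _ ⟨_, _, _, hn⟩ ↦ hn ▸ card_le_univ _⟩

theorem card_biUnion_le_sSup_disjointUnionCards {f : Fin k → Finset α} (hf : ∀ i, P (f i))
    (hfd : Pairwise (Function.onFun Disjoint f)) :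
    #(univ.biUnion f) ≤ sSup (disjointUnionCards P k) :=
  le_csSup bddAbove_disjointUnionCards ⟨f, hf, hfd, rfl⟩

theorem exists_card_biUnion_eq_sSup_disjointUnionCards (hP : P ∅) :
    ∃ f : Fin k → Finset α, (∀ i, P (f i)) ∧ Pairwise (Function.onFun Disjoint f) ∧
      sSup (disjointUnionCards P k) = #(univ.biUnion f) :=
  Nat.sSup_mem (⟨_, fun _ ↦ ∅, fun _ ↦ hP, fun _ _ _ ↦ disjoint_empty_left _, rfl⟩ :
    (disjointUnionCards P k).Nonempty)
    bddAbove_disjointUnionCards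

end DisjointUnionCards

section PosetWidths

variable (α : Type*) [PartialOrder α] [Fintype α] [DecidableEq α]

theorem cMax_eq_sSup_disjointUnionCards (k : ℕ) :
    cMax α k = sSup (disjointUnionCards (fun s : Finset α ↦ IsChain (· ≤ ·) (s : Set α)) k) :=
  rfl

theorem aMax_eq_sSup_disjointUnionCards (k : ℕ) :
    aMax α k = sSup (disjointUnionCards (fun s : Finset α ↦ IsAntichain (· ≤ ·) (s : Set α)) k) :=
  rfl

variable {α} in
theorem card_biUnion_le_cMax {l : ℕ} {C : Fin l → Finset α}
    (hC : ∀ i, IsChain (· ≤ ·) (C i : Set α)) (hCd : Pairwise (Function.onFun Disjoint C)) :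
    #(univ.biUnion C) ≤ cMax α l :=
  card_biUnion_le_sSup_disjointUnionCards (P := fun s : Finset α ↦ IsChain (· ≤ ·) (s : Set α))
    hC hCd

variable {α} in
theorem card_biUnion_le_aMax {k : ℕ} {A : Fin k → Finset α}
    (hA : ∀ j, IsAntichain (· ≤ ·) (A j : Set α)) (hAd : Pairwise (Function.onFun Disjoint A)) :
    #(univ.biUnion A) ≤ aMax α k :=
  card_biUnion_le_sSup_disjointUnionCards (P := fun s : Finset α ↦ IsAntichain (· ≤ ·) (s : Set α))
    hA hAd

theorem cMax_add_aMax_le (l k : ℕ) :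
    cMax α l + aMax α k ≤ Fintype.card α + k * l := by
  obtain ⟨C, hC, hCd, hCmax⟩ := exists_card_biUnion_eq_sSup_disjointUnionCards (k := l)
    (P := fun s : Finset α ↦ IsChain (· ≤ ·) (s : Set α)) (by simp)
  obtain ⟨A, hA, hAd, hAmax⟩ := exists_card_biUnion_eq_sSup_disjointUnionCards (k := k)
    (P := fun s : Finset α ↦ IsAntichain (· ≤ ·) (s : Set α)) (by simp)
  rw [cMax_eq_sSup_disjointUnionCards, aMax_eq_sSup_disjointUnionCards, hCmax, hAmax]
  simpa [Nat.mul_comm l k] using card_biUnion_add_card_biUnion_le hC hCd hA hAd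

end PosetWidths

theorem orthogonality_criterion
    (α : Type*) [PartialOrder α] [Fintype α] [DecidableEq α]
    (l k : ℕ) (C : Fin l → Finset α) (A : Fin k → Finset α)
    (hC : ∀ i, IsChain (· ≤ ·) (↑(C i) : Set α))
    (hCd : Pairwise (Function.onFun Disjoint C))
    (hA : ∀ j, IsAntichain (· ≤ ·) (↑(A j) : Set α))
    (hAd : Pairwise (Function.onFun Disjoint A)) :
    (Finset.univ.biUnion C ∪ Finset.univ.biUnion A = Finset.univ ∧
      ∀ i j, (C i ∩ A j).Nonempty) ↔
    ((Finset.univ.biUnion C).card = cMax α l ∧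
     (Finset.univ.biUnion A).card = aMax α k ∧
     cMax α l + aMax α k = Fintype.card α + k * l) := by
  have hCle := card_biUnion_le_cMax hC hCd
  have hAle := card_biUnion_le_aMax hA hAd
  have hmax := cMax_add_aMax_le α l k
  change IsOrthogonal C A ↔ _
  rw [isOrthogonal_iff_card_biUnion_add_card_biUnion_eq hC hCd hA hAd, Fintype.card_prod,
    Fintype.card_fin, Fintype.card_fin, Nat.mul_comm l k]
  omega
end

section
/- (Gansner) Let p_1 be a maximal element of a finite poset P, and p_2 a maximal element of P - {p_1} such that p_1 covers p_2. Define boxes A, B by λ(P - {p_1}) = λ(P) - {B} and λ(P - {p_1, p_2}) = λ(P) - {A, B}. Then the column index of A is strictly less than the column index of B: x_A < x_B. -/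
open Finset

set_option linter.unusedSectionVars false
set_option linter.unusedVariables false
set_option linter.unreachableTactic false
set_option linter.unusedTactic false
set_option maxHeartbeats 1000000

section Basics
variable (β : Type*) [PartialOrder β] [Fintype β] [DecidableEq β]

def cSet (k : ℕ) : Set ℕ := {n : ℕ | ∃ f : Fin k → Finset β,
    (∀ i, IsChain (· ≤ ·) (↑(f i) : Set β)) ∧
    Pairwise (Function.onFun Disjoint f) ∧
    n = (Finset.univ.biUnion f).card}

lemma cMax_eq_sSup (k : ℕ) : cMax β k = sSup (cSet β k) := rfl

lemma zero_mem_cSet (k : ℕ) : 0 ∈ cSet β k := by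
  refine ⟨fun _ => ∅, ?_, ?_, ?_⟩
  · intro i; rw [Finset.coe_empty]; exact Set.subsingleton_empty.isChain
  · intro i j _; exact disjoint_bot_left
  · symm; rw [Finset.card_eq_zero]; ext a; simp

lemma cSet_bdd (k : ℕ) : BddAbove (cSet β k) := by
  refine ⟨Fintype.card β, ?_⟩
  rintro n ⟨f, -, -, rfl⟩
  exact Finset.card_le_univ _ |>.trans (le_of_eq (Finset.card_univ))

lemma cMax_mem (k : ℕ) : cMax β k ∈ cSet β k :=
  Nat.sSup_mem ⟨0, zero_mem_cSet β k⟩ (cSet_bdd β k)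

lemma le_cMax {k n : ℕ} (h : n ∈ cSet β k) : n ≤ cMax β k :=
  le_csSup (cSet_bdd β k) h

lemma cMax_zero : cMax β 0 = 0 := by
  obtain ⟨f, -, -, h⟩ := cMax_mem β 0
  rw [show (Finset.univ.biUnion f) = ∅ from rfl] at h
  simpa using h

lemma cMax_mono {k l : ℕ} (h : k ≤ l) : cMax β k ≤ cMax β l := by
  obtain ⟨f, hch, hdis, hcard⟩ := cMax_mem β k
  rw [hcard]
  apply le_cMax
  refine ⟨fun i => if hi : (i : ℕ) < k then f ⟨i, hi⟩ else ∅, ?_, ?_, ?_⟩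
  · intro i; dsimp only; split
    · exact hch _
    · simp
  · intro i j hij
    dsimp only [Function.onFun]
    split <;> split <;> simp_all
    · exact hdis (by simpa [Fin.ext_iff] using hij)
  · congr 1
    ext a
    simp only [Finset.mem_biUnion, Finset.mem_univ, true_and]
    constructor
    · rintro ⟨i, hi⟩; exact ⟨⟨i, lt_of_lt_of_le i.2 h⟩, by simp [i.2, hi]⟩
    · rintro ⟨i, hi⟩
      by_cases hik : (i : ℕ) < k
      · simp only [dif_pos hik] at hi; exact ⟨_, hi⟩
      · simp [dif_neg hik] at hi

end Basics



section Flow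
variable {β : Type*} [PartialOrder β] [Fintype β] [DecidableEq β]

abbrev FV (β : Type*) := (β × Bool) ⊕ Bool

variable (β) in
def vs : FV β := Sum.inr false
variable (β) in
def vt : FV β := Sum.inr true
def vin (a : β) : FV β := Sum.inl (a, false)
def vout (a : β) : FV β := Sum.inl (a, true)

def allowed : FV β → FV β → Prop
  | Sum.inr false, Sum.inr true => True
  | Sum.inr false, Sum.inl (_, false) => True
  | Sum.inl (a, false), Sum.inl (b, true) => a = b
  | Sum.inl (a, true), Sum.inl (b, false) => a < b
  | Sum.inl (_, true), Sum.inr true => True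
  | _, _ => False

lemma not_allowed_into_vs (u : FV β) : ¬ allowed u (vs β) := by
  rcases u with ⟨a, _ | _⟩ | (_ | _) <;> simp [allowed, vs]

lemma not_allowed_out_vt (u : FV β) : ¬ allowed (vt β) u := by
  rcases u with ⟨a, _ | _⟩ | (_ | _) <;> simp [allowed, vt]

lemma allowed_from_vin {a : β} {w : FV β} (h : allowed (vin a) w) : w = vout a := by
  rcases w with ⟨b, _ | _⟩ | (_ | _) <;> simp_all [allowed, vin, vout]

lemma allowed_into_vout {a : β} {u : FV β} (h : allowed u (vout a)) : u = vin a := by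
  rcases u with ⟨b, _ | _⟩ | (_ | _) <;> simp_all [allowed, vin, vout]

lemma allowed_from_vout {a : β} {w : FV β} (h : allowed (vout a) w) :
    w = vt β ∨ ∃ b, a < b ∧ w = vin b := by
  rcases w with ⟨b, _ | _⟩ | (_ | _) <;> simp_all [allowed, vin, vout, vt]

lemma allowed_into_vin {a : β} {u : FV β} (h : allowed u (vin a)) :
    u = vs β ∨ ∃ b, b < a ∧ u = vout b := by
  rcases u with ⟨b, _ | _⟩ | (_ | _) <;> simp_all [allowed, vin, vout, vs]

lemma allowed_from_vs {w : FV β} (h : allowed (vs β) w) : w = vt β ∨ ∃ a, w = vin a := by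
  rcases w with ⟨b, _ | _⟩ | (_ | _) <;> simp_all [allowed, vin, vs, vt]

open scoped Classical in
noncomputable def ht (a : β) : ℕ := (univ.filter (fun x => x < a)).card

open scoped Classical in
lemma ht_lt_ht {a b : β} (h : a < b) : ht a < ht b := by
  unfold ht
  apply Finset.card_lt_card
  rw [Finset.ssubset_iff_of_subset]
  · exact ⟨a, by simp [h], by simp⟩
  · intro x hx
    simp only [mem_filter, mem_univ, true_and] at hx ⊢
    exact hx.trans h

open scoped Classical in
lemma ht_lt_card (a : β) : ht a < Fintype.card β := by
  rw [← Finset.card_univ]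
  unfold ht
  apply Finset.card_lt_card
  rw [Finset.ssubset_iff_of_subset (Finset.filter_subset _ _)]
  exact ⟨a, by simp, by simp⟩

noncomputable def rho : FV β → ℕ
  | Sum.inr false => 0
  | Sum.inl (a, false) => 2 * ht a + 1
  | Sum.inl (a, true) => 2 * ht a + 2
  | Sum.inr true => 2 * Fintype.card β + 3

lemma rho_lt_of_allowed {u v : FV β} (h : allowed u v) : rho u < rho v := by
  rcases u with ⟨a, _ | _⟩ | (_ | _) <;> rcases v with ⟨b, _ | _⟩ | (_ | _) <;>
    simp_all [allowed, rho] <;>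
    first
      | omega
      | (have := ht_lt_ht h; omega)
      | (have := ht_lt_card a; omega)
      | (have := ht_lt_card b; omega)

structure IsFlow (f : FV β → FV β → ℕ) (k : ℕ) : Prop where
  supp : ∀ u v, f u v ≠ 0 → allowed u v
  cap : ∀ a : β, f (vin a) (vout a) ≤ 1
  cons : ∀ v, v ≠ vs β → v ≠ vt β → ∑ u, f u v = ∑ w, f v w
  val : ∑ w, f (vs β) w = k

def coverage (f : FV β → FV β → ℕ) : ℕ := ∑ a : β, f (vin a) (vout a)

lemma IsFlow.into_vs {f : FV β → FV β → ℕ} {k : ℕ} (hf : IsFlow f k) (u : FV β) :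
    f u (vs β) = 0 := by
  by_contra h
  exact not_allowed_into_vs u (hf.supp _ _ h)

lemma IsFlow.out_vt {f : FV β → FV β → ℕ} {k : ℕ} (hf : IsFlow f k) (u : FV β) :
    f (vt β) u = 0 := by
  by_contra h
  exact not_allowed_out_vt u (hf.supp _ _ h)

lemma IsFlow.from_vin {f : FV β → FV β → ℕ} {k : ℕ} (hf : IsFlow f k) {a : β} {w : FV β}
    (hw : w ≠ vout a) : f (vin a) w = 0 := by
  by_contra h
  exact hw (allowed_from_vin (hf.supp _ _ h))

lemma IsFlow.into_vout {f : FV β → FV β → ℕ} {k : ℕ} (hf : IsFlow f k) {a : β} {u : FV β}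
    (hu : u ≠ vin a) : f u (vout a) = 0 := by
  by_contra h
  exact hu (allowed_into_vout (hf.supp _ _ h))

lemma vs_ne_vt : (vs β) ≠ vt β := by simp [vs, vt]
lemma vin_ne_vs (a : β) : vin a ≠ vs β := by simp [vin, vs]
lemma vin_ne_vt (a : β) : vin a ≠ vt β := by simp [vin, vt]
lemma vout_ne_vs (a : β) : vout a ≠ vs β := by simp [vout, vs]
lemma vout_ne_vt (a : β) : vout a ≠ vt β := by simp [vout, vt]
lemma vin_ne_vout (a b : β) : vin a ≠ vout b := by simp [vin, vout]
lemma vin_inj {a b : β} (h : vin a = vin b) : a = b := by simpa [vin] using h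
lemma vout_inj {a b : β} (h : vout a = vout b) : a = b := by simpa [vout] using h

lemma sum_split (g : FV β → ℕ) :
    ∑ v, g v = g (vs β) + g (vt β) + ∑ v ∈ univ \ {vs β, vt β}, g v := by
  have h1 : (univ : Finset (FV β)) = insert (vs β) (insert (vt β) (univ \ {vs β, vt β})) := by
    ext v
    simp only [Finset.mem_insert, Finset.mem_sdiff, Finset.mem_univ, true_iff,
      Finset.mem_insert, Finset.mem_singleton, true_and]
    tauto
  conv_lhs => rw [h1]
  rw [Finset.sum_insert (by simp [vs_ne_vt]), Finset.sum_insert (by simp), add_assoc]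

/-- value into the sink equals value out of the source. -/
lemma IsFlow.val_vt {f : FV β → FV β → ℕ} {k : ℕ} (hf : IsFlow f k) :
    ∑ u, f u (vt β) = k := by
  have htot : ∑ v, ∑ u, f u v = ∑ v, ∑ w, f v w := Finset.sum_comm
  rw [sum_split (fun v => ∑ u, f u v), sum_split (fun v => ∑ w, f v w)] at htot
  have hrest : ∑ v ∈ univ \ {vs β, vt β}, (∑ u, f u v)
      = ∑ v ∈ univ \ {vs β, vt β}, (∑ w, f v w) := by
    refine Finset.sum_congr rfl fun v hv => ?_
    simp only [Finset.mem_sdiff, Finset.mem_univ, true_and, Finset.mem_insert,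
      Finset.mem_singleton] at hv
    push_neg at hv
    exact hf.cons v hv.1 hv.2
  have hvs_in : ∑ u, f u (vs β) = 0 := Finset.sum_eq_zero fun u _ => hf.into_vs u
  have hvt_out : ∑ w, f (vt β) w = 0 := Finset.sum_eq_zero fun w _ => hf.out_vt w
  have hval := hf.val
  beta_reduce at htot
  linarith [htot, hrest]

end Flow

section ChainFlow
variable {β : Type*} [PartialOrder β] [Fintype β] [DecidableEq β]

lemma chain_exists_min {c : Finset β} (hc : IsChain (· ≤ ·) (↑c : Set β)) (hne : c.Nonempty) :
    ∃ a ∈ c, ∀ b ∈ c, a ≤ b := by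
  obtain ⟨a, ha, hmin⟩ := Finset.exists_minimal hne
  refine ⟨a, ha, fun b hb => ?_⟩
  rcases eq_or_ne b a with rfl | hne'
  · exact le_refl _
  · rcases hc (Finset.mem_coe.2 ha) (Finset.mem_coe.2 hb) (Ne.symm hne') with h | h
    · exact h
    · rcases lt_or_eq_of_le h with h' | h'
      · exact absurd (hmin hb h'.le) (not_le_of_gt h')
      · exact le_of_eq h'.symm

lemma chain_exists_max {c : Finset β} (hc : IsChain (· ≤ ·) (↑c : Set β)) (hne : c.Nonempty) :
    ∃ a ∈ c, ∀ b ∈ c, b ≤ a := by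
  obtain ⟨a, ha, hmax⟩ := Finset.exists_maximal hne
  refine ⟨a, ha, fun b hb => ?_⟩
  rcases eq_or_ne b a with rfl | hne'
  · exact le_refl _
  · rcases hc (Finset.mem_coe.2 ha) (Finset.mem_coe.2 hb) (Ne.symm hne') with h | h
    · rcases lt_or_eq_of_le h with h' | h'
      · exact absurd (hmax hb h'.le) (not_le_of_gt h')
      · exact le_of_eq h'.symm
    · exact h

open scoped Classical in
noncomputable def chainFlow (c : Finset β) : FV β → FV β → ℕ
  | Sum.inr false, Sum.inr true => if c = ∅ then 1 else 0
  | Sum.inr false, Sum.inl (a, false) => if a ∈ c ∧ ∀ b ∈ c, a ≤ b then 1 else 0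
  | Sum.inl (a, false), Sum.inl (b, true) => if a = b ∧ a ∈ c then 1 else 0
  | Sum.inl (a, true), Sum.inl (b, false) =>
      if a ∈ c ∧ b ∈ c ∧ a < b ∧ (∀ x ∈ c, x ≤ a ∨ b ≤ x) then 1 else 0
  | Sum.inl (a, true), Sum.inr true => if a ∈ c ∧ ∀ b ∈ c, b ≤ a then 1 else 0
  | _, _ => 0

open scoped Classical in
lemma chainFlow_st (c : Finset β) : chainFlow c (vs β) (vt β) = if c = ∅ then 1 else 0 := by
  simp [chainFlow, vs, vt]

open scoped Classical in
lemma chainFlow_s_in (c : Finset β) (a : β) :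
    chainFlow c (vs β) (vin a) = if a ∈ c ∧ ∀ b ∈ c, a ≤ b then 1 else 0 := by
  simp [chainFlow, vs, vin]

open scoped Classical in
lemma chainFlow_cap (c : Finset β) (a b : β) :
    chainFlow c (vin a) (vout b) = if a = b ∧ a ∈ c then 1 else 0 := by
  simp [chainFlow, vin, vout]

open scoped Classical in
lemma chainFlow_cap' (c : Finset β) (a : β) :
    chainFlow c (vin a) (vout a) = if a ∈ c then 1 else 0 := by
  simp [chainFlow_cap]

open scoped Classical in
lemma chainFlow_mid (c : Finset β) (a b : β) :
    chainFlow c (vout a) (vin b)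
      = if a ∈ c ∧ b ∈ c ∧ a < b ∧ (∀ x ∈ c, x ≤ a ∨ b ≤ x) then 1 else 0 := by
  simp [chainFlow, vout, vin]

open scoped Classical in
lemma chainFlow_out_t (c : Finset β) (a : β) :
    chainFlow c (vout a) (vt β) = if a ∈ c ∧ ∀ b ∈ c, b ≤ a then 1 else 0 := by
  simp [chainFlow, vout, vt]

lemma chainFlow_supp (c : Finset β) (u v : FV β) (h : chainFlow c u v ≠ 0) : allowed u v := by
  rcases u with ⟨a, _ | _⟩ | (_ | _) <;> rcases v with ⟨b, _ | _⟩ | (_ | _) <;>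
    simp_all [chainFlow, allowed] <;> tauto

lemma chainFlow_le_one (c : Finset β) (u v : FV β) : chainFlow c u v ≤ 1 := by
  rcases u with ⟨a, _ | _⟩ | (_ | _) <;> rcases v with ⟨b, _ | _⟩ | (_ | _) <;>
    simp [chainFlow] <;> split <;> simp

lemma chainFlow_isFlow {c : Finset β} (hc : IsChain (· ≤ ·) (↑c : Set β)) :
    IsFlow (chainFlow c) 1 := by
  constructor
  · exact chainFlow_supp c
  · intro a; rw [chainFlow_cap']; split <;> simp
  · -- conservation
    intro v hvs hvt
    rcases v with ⟨a, b⟩ | (_ | _)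
    · rcases b with _ | _
      · -- v = vin a
        have hrhs : ∑ w, chainFlow c (vin a) w = if a ∈ c then 1 else 0 := by
          rw [Finset.sum_eq_single (vout a)]
          · exact chainFlow_cap' c a
          · intro w _ hw
            by_contra h
            exact hw (allowed_from_vin (chainFlow_supp c _ _ h))
          · simp
        rw [show (Sum.inl (a, false) : FV β) = vin a from rfl, hrhs]
        by_cases hac : a ∈ c
        · by_cases hmin : ∀ b ∈ c, a ≤ b
          · rw [Finset.sum_eq_single (vs β)]
            · rw [chainFlow_s_in, if_pos (show a ∈ c ∧ ∀ b ∈ c, a ≤ b from ⟨hac, hmin⟩), if_pos hac]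
            · intro u _ hu
              by_contra h
              rcases allowed_into_vin (chainFlow_supp c _ _ h) with h' | ⟨b, hba, h'⟩
              · exact hu h'
              · subst h'
                rw [chainFlow_mid] at h
                simp only [ne_eq, ite_eq_right_iff, not_forall] at h
                obtain ⟨⟨hbc, -, hba', -⟩, -⟩ := h
                exact absurd (hmin b hbc) (not_le_of_gt hba')
            · simp
          · -- a has a predecessor
            push_neg at hmin
            obtain ⟨b₀, hb₀c, hb₀⟩ := hmin
            have hb₀a : b₀ < a := by
              rcases hc (Finset.mem_coe.2 hac) (Finset.mem_coe.2 hb₀c)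
                (fun h => hb₀ (le_of_eq h)) with h | h
              · exact absurd h hb₀
              · exact lt_of_le_of_ne h (fun h' => hb₀ (le_of_eq h'.symm))
            classical
            have hsne : (c.filter (· < a)).Nonempty := ⟨b₀, Finset.mem_filter.2 ⟨hb₀c, hb₀a⟩⟩
            have hsch : IsChain (· ≤ ·) (↑(c.filter (· < a)) : Set β) :=
              hc.mono (by intro x hx; rw [Finset.coe_filter] at hx; exact hx.1)
            obtain ⟨p, hp, hpmax⟩ := chain_exists_max hsch hsne
            rw [Finset.mem_filter] at hp
            have hcond : p ∈ c ∧ a ∈ c ∧ p < a ∧ ∀ x ∈ c, x ≤ p ∨ a ≤ x := by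
              refine ⟨hp.1, hac, hp.2, fun x hx => ?_⟩
              rcases eq_or_ne x a with rfl | hxa
              · exact Or.inr (le_refl _)
              · rcases hc (Finset.mem_coe.2 hx) (Finset.mem_coe.2 hac) hxa with h | h
                · exact Or.inl (hpmax x (Finset.mem_filter.2 ⟨hx, lt_of_le_of_ne h hxa⟩))
                · exact Or.inr h
            rw [Finset.sum_eq_single (vout p)]
            · rw [chainFlow_mid, if_pos hcond, if_pos hac]
            · intro u _ hu
              by_contra h
              rcases allowed_into_vin (chainFlow_supp c _ _ h) with h' | ⟨q, hqa, h'⟩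
              · subst h'
                rw [chainFlow_s_in] at h
                simp only [ne_eq, ite_eq_right_iff, not_forall] at h
                obtain ⟨⟨-, hminq⟩, -⟩ := h
                exact absurd (hminq p hp.1) (not_le_of_gt hp.2)
              · subst h'
                rw [chainFlow_mid] at h
                simp only [ne_eq, ite_eq_right_iff, not_forall] at h
                obtain ⟨⟨hqc, -, hqa', hall⟩, -⟩ := h
                rcases hall p hp.1 with h' | h'
                · have : q ≤ p := hpmax q (Finset.mem_filter.2 ⟨hqc, hqa'⟩)
                  exact hu (congrArg vout (le_antisymm this h').symm ▸ rfl)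
                · exact absurd h' (not_le_of_gt hp.2)
            · simp
        · rw [if_neg hac]
          refine Finset.sum_eq_zero fun u _ => ?_
          by_contra h
          rcases allowed_into_vin (chainFlow_supp c _ _ h) with h' | ⟨q, hqa, h'⟩
          · subst h'
            rw [chainFlow_s_in] at h
            simp only [ne_eq, ite_eq_right_iff, not_forall] at h
            exact hac h.1.1
          · subst h'
            rw [chainFlow_mid] at h
            simp only [ne_eq, ite_eq_right_iff, not_forall] at h
            exact hac h.1.2.1
      · -- v = vout a
        have hlhs : ∑ u, chainFlow c u (vout a) = if a ∈ c then 1 else 0 := by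
          rw [Finset.sum_eq_single (vin a)]
          · exact chainFlow_cap' c a
          · intro u _ hu
            by_contra h
            exact hu (allowed_into_vout (chainFlow_supp c _ _ h))
          · simp
        rw [show (Sum.inl (a, true) : FV β) = vout a from rfl, hlhs]
        by_cases hac : a ∈ c
        · by_cases hmax : ∀ b ∈ c, b ≤ a
          · rw [Finset.sum_eq_single (vt β)]
            · rw [chainFlow_out_t, if_pos (show a ∈ c ∧ ∀ b ∈ c, b ≤ a from ⟨hac, hmax⟩), if_pos hac]
            · intro w _ hw
              by_contra h
              rcases allowed_from_vout (chainFlow_supp c _ _ h) with h' | ⟨b, hab, h'⟩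
              · exact hw h'
              · subst h'
                rw [chainFlow_mid] at h
                simp only [ne_eq, ite_eq_right_iff, not_forall] at h
                obtain ⟨⟨-, hbc, hab', -⟩, -⟩ := h
                exact absurd (hmax b hbc) (not_le_of_gt hab')
            · simp
          · push_neg at hmax
            obtain ⟨b₀, hb₀c, hb₀⟩ := hmax
            have hab₀ : a < b₀ := by
              rcases hc (Finset.mem_coe.2 hac) (Finset.mem_coe.2 hb₀c)
                (fun h => hb₀ (le_of_eq h.symm)) with h | h
              · exact lt_of_le_of_ne h (fun h' => hb₀ (le_of_eq h'.symm))
              · exact absurd h hb₀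
            classical
            have hsne : (c.filter (a < ·)).Nonempty := ⟨b₀, Finset.mem_filter.2 ⟨hb₀c, hab₀⟩⟩
            have hsch : IsChain (· ≤ ·) (↑(c.filter (a < ·)) : Set β) :=
              hc.mono (by intro x hx; rw [Finset.coe_filter] at hx; exact hx.1)
            obtain ⟨p, hp, hpmin⟩ := chain_exists_min hsch hsne
            rw [Finset.mem_filter] at hp
            have hcond : a ∈ c ∧ p ∈ c ∧ a < p ∧ ∀ x ∈ c, x ≤ a ∨ p ≤ x := by
              refine ⟨hac, hp.1, hp.2, fun x hx => ?_⟩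
              rcases eq_or_ne x a with rfl | hxa
              · exact Or.inl (le_refl _)
              · rcases hc (Finset.mem_coe.2 hx) (Finset.mem_coe.2 hac) hxa with h | h
                · exact Or.inl h
                · exact Or.inr (hpmin x (Finset.mem_filter.2 ⟨hx, lt_of_le_of_ne h (Ne.symm hxa)⟩))
            rw [Finset.sum_eq_single (vin p)]
            · rw [chainFlow_mid, if_pos hcond, if_pos hac]
            · intro w _ hw
              by_contra h
              rcases allowed_from_vout (chainFlow_supp c _ _ h) with h' | ⟨q, haq, h'⟩
              · subst h'
                rw [chainFlow_out_t] at h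
                simp only [ne_eq, ite_eq_right_iff, not_forall] at h
                obtain ⟨⟨-, hmaxq⟩, -⟩ := h
                exact absurd (hmaxq p hp.1) (not_le_of_gt hp.2)
              · subst h'
                rw [chainFlow_mid] at h
                simp only [ne_eq, ite_eq_right_iff, not_forall] at h
                obtain ⟨⟨-, hqc, haq', hall⟩, -⟩ := h
                rcases hall p hp.1 with h' | h'
                · exact absurd h' (not_le_of_gt hp.2)
                · have : p ≤ q := hpmin q (Finset.mem_filter.2 ⟨hqc, haq'⟩)
                  exact hw (congrArg vin (le_antisymm this h') ▸ rfl)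
            · simp
        · rw [if_neg hac]
          symm
          refine Finset.sum_eq_zero fun w _ => ?_
          by_contra h
          rcases allowed_from_vout (chainFlow_supp c _ _ h) with h' | ⟨q, haq, h'⟩
          · subst h'
            rw [chainFlow_out_t] at h
            simp only [ne_eq, ite_eq_right_iff, not_forall] at h
            exact hac h.1.1
          · subst h'
            rw [chainFlow_mid] at h
            simp only [ne_eq, ite_eq_right_iff, not_forall] at h
            exact hac h.1.1
    · exact absurd rfl hvs
    · exact absurd rfl hvt
  · -- value
    rcases Finset.eq_empty_or_nonempty c with rfl | hne
    · rw [Finset.sum_eq_single (vt β)]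
      · rw [chainFlow_st, if_pos rfl]
      · intro w _ hw
        by_contra h
        rcases allowed_from_vs (chainFlow_supp _ _ _ h) with h' | ⟨a, h'⟩
        · exact hw h'
        · subst h'
          rw [chainFlow_s_in] at h
          simp at h
      · simp
    · obtain ⟨m, hm, hmin⟩ := chain_exists_min hc hne
      rw [Finset.sum_eq_single (vin m)]
      · rw [chainFlow_s_in, if_pos (show m ∈ c ∧ ∀ b ∈ c, m ≤ b from ⟨hm, hmin⟩)]
      · intro w _ hw
        by_contra h
        rcases allowed_from_vs (chainFlow_supp _ _ _ h) with h' | ⟨a, h'⟩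
        · subst h'
          rw [chainFlow_st, if_neg (Finset.nonempty_iff_ne_empty.1 hne)] at h
          exact h rfl
        · subst h'
          rw [chainFlow_s_in] at h
          simp only [ne_eq, ite_eq_right_iff, not_forall] at h
          obtain ⟨⟨hace, hmina⟩, -⟩ := h
          exact hw (congrArg vin (le_antisymm (hmina m hm) (hmin a hace)) ▸ rfl)
      · simp

open scoped Classical in
lemma chainFlow_coverage (c : Finset β) : coverage (chainFlow c) = c.card := by
  unfold coverage
  classical
  rw [Finset.sum_congr rfl (fun a _ => chainFlow_cap' c a)]
  rw [Finset.sum_ite_mem, Finset.univ_inter, Finset.sum_const, smul_eq_mul, mul_one]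

end ChainFlow

section FlowAlg
variable {β : Type*} [PartialOrder β] [Fintype β] [DecidableEq β]

open scoped Classical in
lemma sum_indicator_mem {k : ℕ} (f : Fin k → Finset β)
    (hdis : Pairwise (Function.onFun Disjoint f)) (a : β) :
    ∑ i, (if a ∈ f i then 1 else 0) = if a ∈ Finset.univ.biUnion f then 1 else 0 := by
  by_cases h : a ∈ Finset.univ.biUnion f
  · rw [if_pos h]
    rw [Finset.mem_biUnion] at h
    obtain ⟨i₀, -, hi₀⟩ := h
    rw [Finset.sum_eq_single i₀]
    · rw [if_pos hi₀]
    · intro j _ hj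
      rw [if_neg]
      intro hja
      exact Finset.disjoint_left.1 (hdis hj) hja hi₀
    · simp
  · rw [if_neg h]
    refine Finset.sum_eq_zero fun i _ => ?_
    rw [if_neg]
    intro hia
    exact h (Finset.mem_biUnion.2 ⟨i, Finset.mem_univ i, hia⟩)

/-- A disjoint family of `k` chains gives a flow of value `k` whose coverage is the
cardinality of the union. -/
lemma family_isFlow {k : ℕ} (f : Fin k → Finset β)
    (hch : ∀ i, IsChain (· ≤ ·) (↑(f i) : Set β))
    (hdis : Pairwise (Function.onFun Disjoint f)) :
    IsFlow (fun u v => ∑ i, chainFlow (f i) u v) k ∧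
    coverage (fun u v => ∑ i, chainFlow (f i) u v) = (Finset.univ.biUnion f).card := by
  classical
  constructor
  · constructor
    · intro u v h
      simp only [ne_eq] at h
      by_contra hall
      refine h (Finset.sum_eq_zero fun i _ => ?_)
      by_contra h'
      exact hall (chainFlow_supp _ _ _ h')
    · intro a
      calc ∑ i, chainFlow (f i) (vin a) (vout a)
          = ∑ i, (if a ∈ f i then 1 else 0) :=
            Finset.sum_congr rfl fun i _ => chainFlow_cap' _ a
        _ = if a ∈ Finset.univ.biUnion f then 1 else 0 := sum_indicator_mem f hdis a
        _ ≤ 1 := by split <;> simp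
    · intro v hvs hvt
      rw [Finset.sum_comm, Finset.sum_comm (γ := FV β)]
      exact Finset.sum_congr rfl fun i _ => ((chainFlow_isFlow (hch i)).cons v hvs hvt)
    · rw [Finset.sum_comm]
      rw [Finset.sum_congr rfl fun i (_ : i ∈ Finset.univ) => ((chainFlow_isFlow (hch i)).val)]
      simp
  · unfold coverage
    calc ∑ a : β, ∑ i, chainFlow (f i) (vin a) (vout a)
        = ∑ a : β, (if a ∈ Finset.univ.biUnion f then 1 else 0) := by
          refine Finset.sum_congr rfl fun a _ => ?_
          rw [Finset.sum_congr rfl fun i _ => chainFlow_cap' _ a]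
          exact sum_indicator_mem f hdis a
      _ = (Finset.univ.biUnion f).card := by
          rw [Finset.sum_ite_mem, Finset.univ_inter, Finset.sum_const, smul_eq_mul, mul_one]

/-- A flow of value zero is identically zero. -/
lemma IsFlow.eq_zero {f : FV β → FV β → ℕ} (hf : IsFlow f 0) (u v : FV β) : f u v = 0 := by
  have key : ∀ n, ∀ u : FV β, rho u ≤ n → ∑ z, f u z = 0 := by
    intro n
    induction n with
    | zero =>
      intro u hu
      have : u = vs β := by
        rcases u with ⟨a, _ | _⟩ | (_ | _) <;> simp_all [rho, vs]
      subst this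
      exact hf.val
    | succ n ih =>
      intro u hu
      rcases eq_or_ne u (vs β) with rfl | hvs
      · exact hf.val
      rcases eq_or_ne u (vt β) with rfl | hvt
      · exact Finset.sum_eq_zero fun z _ => hf.out_vt z
      rw [← hf.cons u hvs hvt]
      refine Finset.sum_eq_zero fun w _ => ?_
      by_contra h
      have hal := hf.supp _ _ h
      have hrho := rho_lt_of_allowed hal
      have hw : ∑ z, f w z = 0 := ih w (by omega)
      have : f w u ≤ ∑ z, f w z := Finset.single_le_sum (fun z _ => Nat.zero_le _) (Finset.mem_univ u)
      omega
  by_contra h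
  have h1 : f u v ≤ ∑ z, f u z := Finset.single_le_sum (fun z _ => Nat.zero_le _) (Finset.mem_univ v)
  have h2 := key (rho u) u le_rfl
  omega

lemma IsFlow.sub {f g : FV β → FV β → ℕ} {k j : ℕ} (hf : IsFlow f k) (hg : IsFlow g j)
    (hle : ∀ u v, g u v ≤ f u v) (hjk : j ≤ k) :
    IsFlow (fun u v => f u v - g u v) (k - j) := by
  constructor
  · intro u v h
    exact hf.supp u v (by omega)
  · intro a
    exact le_trans (Nat.sub_le _ _) (hf.cap a)
  · intro v hvs hvt
    have h1 := hf.cons v hvs hvt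
    have h2 := hg.cons v hvs hvt
    have e1 : ∑ u, (f u v - g u v) = ∑ u, f u v - ∑ u, g u v := by
      rw [eq_tsub_iff_add_eq_of_le (Finset.sum_le_sum fun u _ => hle u v), ← Finset.sum_add_distrib]
      exact Finset.sum_congr rfl fun u _ => Nat.sub_add_cancel (hle u v)
    have e2 : ∑ w, (f v w - g v w) = ∑ w, f v w - ∑ w, g v w := by
      rw [eq_tsub_iff_add_eq_of_le (Finset.sum_le_sum fun w _ => hle v w), ← Finset.sum_add_distrib]
      exact Finset.sum_congr rfl fun w _ => Nat.sub_add_cancel (hle v w)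
    rw [e1, e2, h1, h2]
  · have e : ∑ w, (f (vs β) w - g (vs β) w) = ∑ w, f (vs β) w - ∑ w, g (vs β) w := by
      rw [eq_tsub_iff_add_eq_of_le (Finset.sum_le_sum fun w _ => hle _ w), ← Finset.sum_add_distrib]
      exact Finset.sum_congr rfl fun w _ => Nat.sub_add_cancel (hle _ w)
    rw [e, hf.val, hg.val]

lemma coverage_sub {f g : FV β → FV β → ℕ} (hle : ∀ u v, g u v ≤ f u v) :
    coverage (fun u v => f u v - g u v) = coverage f - coverage g := by
  unfold coverage
  rw [eq_tsub_iff_add_eq_of_le (Finset.sum_le_sum fun a _ => hle _ _), ← Finset.sum_add_distrib]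
  exact Finset.sum_congr rfl fun a _ => Nat.sub_add_cancel (hle _ _)

lemma coverage_le {f g : FV β → FV β → ℕ} (hle : ∀ u v, g u v ≤ f u v) :
    coverage g ≤ coverage f :=
  Finset.sum_le_sum fun a _ => hle _ _

end FlowAlg

section Decomp
variable {β : Type*} [PartialOrder β] [Fintype β] [DecidableEq β]

lemma chainFlow_cases {c : Finset β} {u v : FV β} (h : chainFlow c u v ≠ 0) :
    (u = vs β ∧ v = vt β ∧ c = ∅ ∧ chainFlow c u v = 1) ∨
    (∃ a, a ∈ c ∧ (∀ b ∈ c, a ≤ b) ∧ u = vs β ∧ v = vin a ∧ chainFlow c u v = 1) ∨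
    (∃ a, a ∈ c ∧ u = vin a ∧ v = vout a ∧ chainFlow c u v = 1) ∨
    (∃ a b, a ∈ c ∧ b ∈ c ∧ a < b ∧ (∀ x ∈ c, x ≤ a ∨ b ≤ x) ∧
      u = vout a ∧ v = vin b ∧ chainFlow c u v = 1) ∨
    (∃ a, a ∈ c ∧ (∀ b ∈ c, b ≤ a) ∧ u = vout a ∧ v = vt β ∧ chainFlow c u v = 1) := by
  classical
  rcases u with ⟨x, _ | _⟩ | (_ | _) <;> rcases v with ⟨y, _ | _⟩ | (_ | _) <;>
    try (simp only [chainFlow] at h; exact absurd rfl h)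
  · -- (vin x, vout y)
    rw [show (Sum.inl (x, false) : FV β) = vin x from rfl,
        show (Sum.inl (y, true) : FV β) = vout y from rfl] at h ⊢
    rw [chainFlow_cap] at h
    split_ifs at h with hcond
    · obtain ⟨rfl, hx⟩ := hcond
      refine Or.inr (Or.inr (Or.inl ⟨x, hx, rfl, rfl, ?_⟩))
      rw [chainFlow_cap, if_pos ⟨rfl, hx⟩]
    · exact absurd rfl h
  · -- (vout x, vin y)
    rw [show (Sum.inl (x, true) : FV β) = vout x from rfl,
        show (Sum.inl (y, false) : FV β) = vin y from rfl] at h ⊢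
    rw [chainFlow_mid] at h
    split_ifs at h with hcond
    · obtain ⟨hx, hy, hxy, hall⟩ := hcond
      refine Or.inr (Or.inr (Or.inr (Or.inl ⟨x, y, hx, hy, hxy, hall, rfl, rfl, ?_⟩)))
      rw [chainFlow_mid, if_pos ⟨hx, hy, hxy, hall⟩]
    · exact absurd rfl h
  · -- (vout x, vt)
    rw [show (Sum.inl (x, true) : FV β) = vout x from rfl,
        show (Sum.inr true : FV β) = vt β from rfl] at h ⊢
    rw [chainFlow_out_t] at h
    split_ifs at h with hcond
    · exact Or.inr (Or.inr (Or.inr (Or.inr ⟨x, hcond.1, hcond.2, rfl, rfl, by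
        rw [chainFlow_out_t, if_pos hcond]⟩)))
    · exact absurd rfl h
  · -- (vs, vin y)
    rw [show (Sum.inr false : FV β) = vs β from rfl,
        show (Sum.inl (y, false) : FV β) = vin y from rfl] at h ⊢
    rw [chainFlow_s_in] at h
    split_ifs at h with hcond
    · exact Or.inr (Or.inl ⟨y, hcond.1, hcond.2, rfl, rfl, by
        rw [chainFlow_s_in, if_pos hcond]⟩)
    · exact absurd rfl h
  · -- (vs, vt)
    rw [show (Sum.inr false : FV β) = vs β from rfl,
        show (Sum.inr true : FV β) = vt β from rfl] at h ⊢
    rw [chainFlow_st] at h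
    split_ifs at h with hcond
    · exact Or.inl ⟨rfl, rfl, hcond, by rw [chainFlow_st, if_pos hcond]⟩
    · exact absurd rfl h

open scoped Classical in
lemma extract_aux {f : FV β → FV β → ℕ} {k : ℕ} (hf : IsFlow f k) :
    ∀ n (a : β), Fintype.card β ≤ ht a + n → (∃ u, 1 ≤ f u (vin a)) →
    ∃ c : Finset β, IsChain (· ≤ ·) (↑c : Set β) ∧ a ∈ c ∧ (∀ b ∈ c, a ≤ b) ∧
      (∀ u v, u ≠ vs β → chainFlow c u v ≤ f u v) := by
  intro n
  induction n with
  | zero => intro a hcard _; exact absurd hcard (by have := ht_lt_card a; omega)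
  | succ n ih =>
    intro a hcard ⟨u₀, hu₀⟩
    -- the capacity edge at a carries flow
    have hin : 1 ≤ ∑ u, f u (vin a) :=
      le_trans hu₀ (Finset.single_le_sum (f := fun u => f u (vin a))
        (fun z _ => Nat.zero_le _) (Finset.mem_univ u₀))
    have hout : 1 ≤ ∑ w, f (vin a) w := by
      rw [← hf.cons (vin a) (vin_ne_vs a) (vin_ne_vt a)]; exact hin
    have hcap : 1 ≤ f (vin a) (vout a) := by
      by_contra h
      have h0 : f (vin a) (vout a) = 0 := by omega
      have : ∑ w, f (vin a) w = 0 := by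
        refine Finset.sum_eq_zero fun w _ => ?_
        by_contra hw
        rcases eq_or_ne w (vout a) with rfl | hwne
        · exact hw h0
        · exact hw (hf.from_vin hwne)
      omega
    have hin2 : 1 ≤ ∑ u, f u (vout a) :=
      le_trans hcap (Finset.single_le_sum (f := fun u => f u (vout a))
        (fun z _ => Nat.zero_le _) (Finset.mem_univ (vin a)))
    have hout2 : 1 ≤ ∑ w, f (vout a) w := by
      rw [← hf.cons (vout a) (vout_ne_vs a) (vout_ne_vt a)]; exact hin2
    have : ∃ w, 1 ≤ f (vout a) w := by
      by_contra h
      push_neg at h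
      have : ∑ w, f (vout a) w = 0 := Finset.sum_eq_zero fun w _ => by have := h w; omega
      omega
    obtain ⟨w, hw⟩ := this
    rcases allowed_from_vout (hf.supp _ _ (show f (vout a) w ≠ 0 by omega)) with rfl | ⟨b, hab, rfl⟩
    · -- the chain ends at a
      refine ⟨{a}, ?_, Finset.mem_singleton_self a, by simp, ?_⟩
      · rw [Finset.coe_singleton]; exact Set.subsingleton_singleton.isChain
      · intro u v hu
        by_cases h0 : chainFlow {a} u v = 0
        · rw [h0]; exact Nat.zero_le _
        rcases chainFlow_cases h0 with ⟨-, -, he, -⟩ | ⟨x, hx, -, rfl, -, -⟩ |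
            ⟨x, hx, rfl, rfl, he⟩ | ⟨x, y, hx, hy, hxy, -, -, -, -⟩ | ⟨x, hx, -, rfl, rfl, he⟩
        · exact absurd he (Finset.singleton_ne_empty a)
        · exact absurd rfl hu
        · rw [Finset.mem_singleton] at hx; subst hx; rw [he]; exact hcap
        · rw [Finset.mem_singleton] at hx hy; subst hx; subst hy
          exact absurd hxy (lt_irrefl _)
        · rw [Finset.mem_singleton] at hx; subst hx; rw [he]; exact hw
    · -- recurse at b
      have hb : Fintype.card β ≤ ht b + n := by
        have := ht_lt_ht hab; omega
      obtain ⟨c', hc'chain, hbc', hbmin, hc'le⟩ := ih b hb ⟨vout a, hw⟩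
      have hanotc' : a ∉ c' := fun h => absurd (lt_of_lt_of_le hab (hbmin a h)) (lt_irrefl _)
      refine ⟨insert a c', ?_, Finset.mem_insert_self a c', ?_, ?_⟩
      · rw [Finset.coe_insert]
        exact hc'chain.insert fun x hx _ => Or.inl (le_of_lt (lt_of_lt_of_le hab (hbmin x hx)))
      · intro x hx
        rcases Finset.mem_insert.1 hx with rfl | hx'
        · exact le_refl _
        · exact le_of_lt (lt_of_lt_of_le hab (hbmin x hx'))
      · intro u v hu
        by_cases h0 : chainFlow (insert a c') u v = 0
        · rw [h0]; exact Nat.zero_le _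
        rcases chainFlow_cases h0 with ⟨-, -, he, -⟩ | ⟨x, hx, -, rfl, -, -⟩ |
            ⟨x, hx, rfl, rfl, he⟩ | ⟨x, y, hx, hy, hxy, hall, rfl, rfl, he⟩ |
            ⟨x, hx, hmax, rfl, rfl, he⟩
        · exact absurd he (Finset.insert_ne_empty a c')
        · exact absurd rfl hu
        · -- capacity edge
          rw [he]
          rcases Finset.mem_insert.1 hx with rfl | hxc'
          · exact hcap
          · have := hc'le (vin x) (vout x) (vin_ne_vs x)
            rw [chainFlow_cap', if_pos hxc'] at this
            exact this
        · -- mid edge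
          rw [he]
          have hyc' : y ∈ c' := by
            rcases Finset.mem_insert.1 hy with rfl | h
            · rcases Finset.mem_insert.1 hx with rfl | h'
              · exact absurd hxy (lt_irrefl _)
              · exact absurd (lt_of_lt_of_le hab (hbmin x h')) (not_lt_of_gt hxy)
            · exact h
          rcases Finset.mem_insert.1 hx with rfl | hxc'
          · -- x = a: then y = b
            have hyb : y = b := by
              rcases hall b (Finset.mem_insert_of_mem hbc') with h | h
              · exact absurd h (not_le_of_gt hab)
              · exact le_antisymm h (hbmin y hyc')
            subst hyb
            exact hw
          · have := hc'le (vout x) (vin y) (vout_ne_vs x)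
            rw [chainFlow_mid, if_pos ⟨hxc', hyc', hxy, fun z hz =>
              hall z (Finset.mem_insert_of_mem hz)⟩] at this
            exact this
        · -- out-t edge
          rw [he]
          have hxc' : x ∈ c' := by
            rcases Finset.mem_insert.1 hx with rfl | h
            · exact absurd (hmax b (Finset.mem_insert_of_mem hbc')) (not_le_of_gt hab)
            · exact h
          have := hc'le (vout x) (vt β) (vout_ne_vs x)
          rw [chainFlow_out_t, if_pos ⟨hxc', fun z hz => hmax z (Finset.mem_insert_of_mem hz)⟩]
            at this
          exact this

/-- From a flow of positive value extract a chain whose chain-flow is dominated by `f`. -/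
lemma exists_chainFlow_le {f : FV β → FV β → ℕ} {k : ℕ} (hf : IsFlow f (k + 1)) :
    ∃ c : Finset β, IsChain (· ≤ ·) (↑c : Set β) ∧ (∀ u v, chainFlow c u v ≤ f u v) := by
  classical
  have hpos : 1 ≤ ∑ w, f (vs β) w := by rw [hf.val]; omega
  have : ∃ w, 1 ≤ f (vs β) w := by
    by_contra h
    push_neg at h
    have : ∑ w, f (vs β) w = 0 := Finset.sum_eq_zero fun w _ => by have := h w; omega
    omega
  obtain ⟨w, hw⟩ := this
  rcases allowed_from_vs (hf.supp _ _ (show f (vs β) w ≠ 0 by omega)) with rfl | ⟨a, rfl⟩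
  · refine ⟨∅, by rw [Finset.coe_empty]; exact Set.subsingleton_empty.isChain, ?_⟩
    intro u v
    by_cases h0 : chainFlow (∅ : Finset β) u v = 0
    · rw [h0]; exact Nat.zero_le _
    rcases chainFlow_cases h0 with ⟨rfl, rfl, -, he⟩ | ⟨x, hx, -⟩ |
        ⟨x, hx, -⟩ | ⟨x, y, hx, -⟩ | ⟨x, hx, -⟩
    · rw [he]; exact hw
    all_goals simp at hx
  · obtain ⟨c, hcchain, hac, hamin, hcle⟩ :=
      extract_aux hf (Fintype.card β) a (by omega) ⟨vs β, hw⟩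
    refine ⟨c, hcchain, ?_⟩
    intro u v
    rcases eq_or_ne u (vs β) with rfl | hu
    · by_cases h0 : chainFlow c (vs β) v = 0
      · rw [h0]; exact Nat.zero_le _
      rcases chainFlow_cases h0 with ⟨-, rfl, he, -⟩ | ⟨x, hx, hxmin, -, rfl, he⟩ |
          ⟨x, hx, hvin, -⟩ | ⟨x, y, hx, hy, hxy, -, hvout, -⟩ | ⟨x, hx, -, hvout, -⟩
      · rw [he] at hac; simp at hac
      · rw [he]
        have hxa : x = a := le_antisymm (hxmin a hac) (hamin x hx)
        subst hxa
        exact hw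
      · exact absurd hvin.symm (vin_ne_vs x)
      · exact absurd hvout.symm (vout_ne_vs x)
      · exact absurd hvout.symm (vout_ne_vs x)
    · exact hcle u v hu

/-- Flow decomposition: a flow of value `k` yields `k` disjoint chains covering
`coverage f` elements, all supported on saturated capacity edges. -/
lemma flow_to_chains {k : ℕ} : ∀ (f : FV β → FV β → ℕ), IsFlow f k →
    ∃ F : Fin k → Finset β, (∀ i, IsChain (· ≤ ·) (↑(F i) : Set β)) ∧
      Pairwise (Function.onFun Disjoint F) ∧
      (Finset.univ.biUnion F).card = coverage f ∧
      (∀ i, ∀ a ∈ F i, 1 ≤ f (vin a) (vout a)) := by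
  induction k with
  | zero =>
    intro f hf
    refine ⟨fun _ => ∅, fun i => by rw [Finset.coe_empty]; exact Set.subsingleton_empty.isChain,
      fun i j _ => disjoint_bot_left, ?_, fun i a ha => by simp at ha⟩
    have : coverage f = 0 := Finset.sum_eq_zero fun a _ => hf.eq_zero _ _
    rw [this, Finset.card_eq_zero]
    ext a; simp
  | succ k ih =>
    intro f hf
    obtain ⟨c, hcchain, hcle⟩ := exists_chainFlow_le hf
    have hcf : IsFlow (chainFlow c) 1 := chainFlow_isFlow hcchain
    have hsub : IsFlow (fun u v => f u v - chainFlow c u v) k := by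
      have := hf.sub hcf hcle (by omega)
      simpa using this
    obtain ⟨F', hch', hdis', hcard', hsat'⟩ := ih _ hsub
    have key : ∀ (j' : Fin k), Disjoint c (F' j') := by
      intro j'
      rw [Finset.disjoint_left]
      intro a hac haF
      have h1 := hsat' j' a haF
      have h2 : chainFlow c (vin a) (vout a) = 1 := by
        rw [chainFlow_cap', if_pos hac]
      have h3 := hf.cap a
      have h4 := hcle (vin a) (vout a)
      simp only [h2] at h1
      omega
    classical
    refine ⟨fun i => if h : i = 0 then c else F' (i.pred h), ?_, ?_, ?_, ?_⟩
    · intro i; dsimp only; split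
      · exact hcchain
      · exact hch' _
    · intro i j hij
      dsimp only [Function.onFun]
      split_ifs with h1 h2 h2
      · exact absurd (h1.trans h2.symm) hij
      · exact key _
      · exact (key _).symm
      · refine hdis' fun h => hij ?_
        rwa [Fin.pred_inj] at h
    · have hU : Finset.univ.biUnion (fun i : Fin (k+1) =>
          if h : i = 0 then c else F' (i.pred h)) = c ∪ Finset.univ.biUnion F' := by
        ext a
        simp only [Finset.mem_biUnion, Finset.mem_univ, true_and, Finset.mem_union]
        constructor
        · rintro ⟨i, hi⟩
          by_cases h : i = 0
          · rw [dif_pos h] at hi; exact Or.inl hi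
          · rw [dif_neg h] at hi; exact Or.inr ⟨_, hi⟩
        · rintro (h | ⟨j, hj⟩)
          · exact ⟨0, by rw [dif_pos rfl]; exact h⟩
          · refine ⟨j.succ, ?_⟩
            rw [dif_neg (Fin.succ_ne_zero j)]
            simpa using hj
      rw [hU, Finset.card_union_of_disjoint (Finset.disjoint_biUnion_right _ _ _ |>.2
        fun j' _ => key j')]
      have hcc := chainFlow_coverage c
      have hcov : coverage (fun u v => f u v - chainFlow c u v)
          = coverage f - coverage (chainFlow c) := coverage_sub hcle
      have hle2 : coverage (chainFlow c) ≤ coverage f := coverage_le hcle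
      rw [hcard', hcov, hcc] at *
      omega
    · intro i a ha
      dsimp only at ha
      by_cases h : i = 0
      · rw [dif_pos h] at ha
        have := hcle (vin a) (vout a)
        rw [chainFlow_cap', if_pos ha] at this
        exact this
      · rw [dif_neg h] at ha
        have := hsat' _ a ha
        omega
end Decomp



section Augment
variable {β : Type*} [PartialOrder β] [Fintype β] [DecidableEq β]

open scoped Classical in
noncomputable def edgeUpd (f : FV β → FV β → ℕ) (p q : FV β) (n : ℕ) : FV β → FV β → ℕ :=
  fun u v => if u = p ∧ v = q then n else f u v

open scoped Classical in
lemma edgeUpd_same (f : FV β → FV β → ℕ) (p q : FV β) (n : ℕ) : edgeUpd f p q n p q = n := by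
  simp [edgeUpd]

open scoped Classical in
lemma edgeUpd_ne (f : FV β → FV β → ℕ) (p q : FV β) (n : ℕ) {u v : FV β}
    (h : ¬(u = p ∧ v = q)) : edgeUpd f p q n u v = f u v := by
  simp only [edgeUpd, if_neg h]

lemma sum_out_edgeUpd_ne (f : FV β → FV β → ℕ) (p q : FV β) (n : ℕ) {w : FV β} (hw : w ≠ p) :
    ∑ z, edgeUpd f p q n w z = ∑ z, f w z :=
  Finset.sum_congr rfl fun z _ => edgeUpd_ne f p q n (fun h => hw h.1)

lemma sum_in_edgeUpd_ne (f : FV β → FV β → ℕ) (p q : FV β) (n : ℕ) {w : FV β} (hw : w ≠ q) :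
    ∑ u, edgeUpd f p q n u w = ∑ u, f u w :=
  Finset.sum_congr rfl fun u _ => edgeUpd_ne f p q n (fun h => hw h.2)

open scoped Classical in
lemma sum_out_edgeUpd_eq (f : FV β → FV β → ℕ) (p q : FV β) (n : ℕ) :
    ∑ z, edgeUpd f p q n p z + f p q = ∑ z, f p z + n := by
  have h1 : (fun z => edgeUpd f p q n p z) = Function.update (f p) q n := by
    funext z
    simp only [edgeUpd, Function.update]
    by_cases h : z = q
    · subst h; simp
    · simp [h]
  calc ∑ z, edgeUpd f p q n p z + f p q
      = (∑ z, Function.update (f p) q n z) + f p q := by rw [h1]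
    _ = (n + ∑ z ∈ Finset.univ \ {q}, f p z) + f p q := by
        rw [Finset.sum_update_of_mem (Finset.mem_univ q)]
    _ = ∑ z, f p z + n := by
        rw [← Finset.sum_erase_add Finset.univ (f p) (Finset.mem_univ q), Finset.erase_eq]
        ring

open scoped Classical in
lemma sum_in_edgeUpd_eq (f : FV β → FV β → ℕ) (p q : FV β) (n : ℕ) :
    ∑ u, edgeUpd f p q n u q + f p q = ∑ u, f u q + n := by
  have h1 : (fun u => edgeUpd f p q n u q) = Function.update (fun u => f u q) p n := by
    funext u
    simp only [edgeUpd, Function.update]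
    by_cases h : u = p
    · subst h; simp
    · simp [h]
  calc ∑ u, edgeUpd f p q n u q + f p q
      = (∑ u, Function.update (fun u => f u q) p n u) + f p q := by rw [h1]
    _ = (n + ∑ u ∈ Finset.univ \ {p}, f u q) + f p q := by
        rw [Finset.sum_update_of_mem (Finset.mem_univ p)]
    _ = ∑ u, f u q + n := by
        rw [← Finset.sum_erase_add Finset.univ (fun u => f u q) (Finset.mem_univ p),
          Finset.erase_eq]
        ring

/-- Residual reachability: if `f` has larger value than `g`, the sink is reachable from the
source along edges where `f` exceeds `g` (forwards) or `g` exceeds `f` (backwards). -/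
lemma reach_vt {f g : FV β → FV β → ℕ} {ka kb : ℕ} (hf : IsFlow f ka) (hg : IsFlow g kb)
    (hlt : kb < ka) :
    Relation.ReflTransGen (fun u v => g u v < f u v ∨ f v u < g v u) (vs β) (vt β) := by
  classical
  by_contra hreach
  set R : FV β → FV β → Prop := fun u v => g u v < f u v ∨ f v u < g v u with hR
  set S : Finset (FV β) := Finset.univ.filter (fun v => Relation.ReflTransGen R (vs β) v)
    with hS
  have hvsS : vs β ∈ S := by
    rw [hS, Finset.mem_filter]
    exact ⟨Finset.mem_univ _, Relation.ReflTransGen.refl⟩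
  have hvtS : vt β ∉ S := by
    rw [hS, Finset.mem_filter]
    rintro ⟨-, h⟩
    exact hreach h
  have hnostep : ∀ v ∈ S, ∀ w, w ∉ S → f v w ≤ g v w ∧ g w v ≤ f w v := by
    intro v hv w hw
    rw [hS, Finset.mem_filter] at hv
    have hnR : ¬ (g v w < f v w ∨ f w v < g w v) := by
      intro hstep
      exact hw (by rw [hS, Finset.mem_filter]; exact ⟨Finset.mem_univ _, hv.2.tail hstep⟩)
    push_neg at hnR
    exact hnR
  set D : FV β → FV β → ℤ := fun u v => (f u v : ℤ) - g u v with hD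
  have hdiv : ∀ v ∈ S, ((∑ w, D v w) - (∑ u, D u v)) = if v = vs β then (ka : ℤ) - kb else 0 := by
    intro v hv
    have hsub1 : ∑ w, D v w = (∑ w, (f v w : ℤ)) - ∑ w, (g v w : ℤ) := by
      rw [← Finset.sum_sub_distrib]
    have hsub2 : ∑ u, D u v = (∑ u, (f u v : ℤ)) - ∑ u, (g u v : ℤ) := by
      rw [← Finset.sum_sub_distrib]
    rcases eq_or_ne v (vs β) with rfl | hvs
    · rw [if_pos rfl, hsub1, hsub2]
      have e1 : ∑ w, ((f (vs β) w : ℕ) : ℤ) = (ka : ℤ) := by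
        rw [← Nat.cast_sum, hf.val]
      have e2 : ∑ w, ((g (vs β) w : ℕ) : ℤ) = (kb : ℤ) := by
        rw [← Nat.cast_sum, hg.val]
      have e3 : ∑ u, ((f u (vs β) : ℕ) : ℤ) = 0 := by
        rw [← Nat.cast_sum, Finset.sum_eq_zero fun u _ => hf.into_vs u]; rfl
      have e4 : ∑ u, ((g u (vs β) : ℕ) : ℤ) = 0 := by
        rw [← Nat.cast_sum, Finset.sum_eq_zero fun u _ => hg.into_vs u]; rfl
      rw [e1, e2, e3, e4]
      ring
    · have hvt : v ≠ vt β := fun h => hvtS (h ▸ hv)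
      rw [if_neg hvs, hsub1, hsub2]
      have e1 : ∑ w, ((f v w : ℕ) : ℤ) = ∑ u, ((f u v : ℕ) : ℤ) := by
        rw [← Nat.cast_sum, ← Nat.cast_sum, (hf.cons v hvs hvt)]
      have e2 : ∑ w, ((g v w : ℕ) : ℤ) = ∑ u, ((g u v : ℕ) : ℤ) := by
        rw [← Nat.cast_sum, ← Nat.cast_sum, (hg.cons v hvs hvt)]
      rw [e1, e2]
      ring
  have hT1 : ∑ v ∈ S, ((∑ w, D v w) - (∑ u, D u v)) = (ka : ℤ) - kb := by
    rw [Finset.sum_congr rfl hdiv, Finset.sum_ite_eq' S (vs β) (fun _ => (ka : ℤ) - kb),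
      if_pos hvsS]
  have hT2 : ∑ v ∈ S, ((∑ w, D v w) - (∑ u, D u v))
      = ∑ v ∈ S, ∑ w ∈ Finset.univ \ S, (D v w - D w v) := by
    have hsplit : ∀ v, (∑ w, D v w) - (∑ u, D u v) = ∑ w, (D v w - D w v) := by
      intro v; rw [← Finset.sum_sub_distrib]
    rw [Finset.sum_congr rfl fun v _ => hsplit v]
    have hinner : ∀ v ∈ S, ∑ w, (D v w - D w v)
        = ∑ w ∈ S, (D v w - D w v) + ∑ w ∈ Finset.univ \ S, (D v w - D w v) := by
      intro v _
      rw [← Finset.sum_add_sum_compl S (fun w => D v w - D w v), Finset.compl_eq_univ_sdiff]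
    rw [Finset.sum_congr rfl hinner, Finset.sum_add_distrib]
    have hzero : ∑ v ∈ S, ∑ w ∈ S, (D v w - D w v) = 0 := by
      have h' : ∑ v ∈ S, ∑ w ∈ S, (D v w - D w v)
          = ∑ v ∈ S, ∑ w ∈ S, D v w - ∑ v ∈ S, ∑ w ∈ S, D w v := by
        rw [← Finset.sum_sub_distrib]
        exact Finset.sum_congr rfl fun v _ => by rw [← Finset.sum_sub_distrib]
      rw [h', Finset.sum_comm]
      ring
    rw [hzero, zero_add]
  have hT3 : ∑ v ∈ S, ∑ w ∈ Finset.univ \ S, (D v w - D w v) ≤ 0 := by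
    apply Finset.sum_nonpos
    intro v hv
    apply Finset.sum_nonpos
    intro w hw
    rw [Finset.mem_sdiff] at hw
    obtain ⟨h1, h2⟩ := hnostep v hv w hw.2
    rw [hD]
    push_cast
    omega
  rw [hT1] at hT2
  rw [← hT2] at hT3
  omega

end Augment



section Augment2

lemma exists_nodup_chain {α : Type*} {R : α → α → Prop} :
    ∀ (l : List α) (a : α), List.Chain R a l →
    ∃ l', List.Chain R a l' ∧ (a :: l').getLast? = (a :: l).getLast? ∧ (a :: l').Nodup := by
  intro l
  induction l with
  | nil => exact fun a _ => ⟨[], List.Chain.nil, rfl, List.nodup_singleton a⟩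
  | cons x t ih =>
    intro a hchain
    obtain ⟨hax, hxt⟩ := List.chain_cons.1 hchain
    obtain ⟨t', ht'chain, ht'last, ht'nd⟩ := ih x hxt
    by_cases hmem : a ∈ x :: t'
    · obtain ⟨pre, suf, hsplit⟩ := List.append_of_mem hmem
      have hchain' : List.Chain' R (x :: t') := ht'chain
      have hsuffix : (a :: suf) <:+ (x :: t') := ⟨pre, hsplit.symm⟩
      have hsufchain : List.Chain' R (a :: suf) := hchain'.suffix hsuffix
      refine ⟨suf, hsufchain, ?_, ht'nd.sublist hsuffix.sublist⟩
      have h1 : (a :: suf).getLast? = (x :: t').getLast? := by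
        rw [hsplit, List.getLast?_append]
        cases hsuf : (a :: suf).getLast? with
        | none => simp at hsuf
        | some b => rfl
      rw [h1, ht'last, List.getLast?_cons_cons]
    · refine ⟨x :: t', List.chain_cons.2 ⟨hax, ht'chain⟩, ?_, List.nodup_cons.2 ⟨hmem, ht'nd⟩⟩
      rw [List.getLast?_cons_cons, List.getLast?_cons_cons, ht'last]

variable {β : Type*} [PartialOrder β] [Fintype β] [DecidableEq β]

lemma aug_rec (f g : FV β → FV β → ℕ) (ka kb : ℕ)
    (hforig : IsFlow f ka) (hgorig : IsFlow g kb) :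
    ∀ (l : List (FV β)) (v : FV β) (f' g' : FV β → FV β → ℕ),
    List.Chain (fun u w => g u w < f u w ∨ f w u < g w u) v l →
    (v :: l).getLast? = some (vt β) →
    (v :: l).Nodup →
    vs β ∉ v :: l →
    v ≠ vt β →
    (∀ u w, f' u w ≠ 0 → allowed u w) →
    (∀ u w, g' u w ≠ 0 → allowed u w) →
    (∀ a : β, f' (vin a) (vout a) ≤ 1) →
    (∀ a : β, g' (vin a) (vout a) ≤ 1) →
    (∀ u w, f' u w + g' u w = f u w + g u w) →
    (∀ w, w ≠ vs β → w ≠ vt β → w ≠ v → ∑ u, f' u w = ∑ z, f' w z) →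
    (∀ w, w ≠ vs β → w ≠ vt β → w ≠ v → ∑ u, g' u w = ∑ z, g' w z) →
    (∑ z, f' v z = ∑ u, f' u v + 1) →
    (∑ u, g' u v = ∑ z, g' v z + 1) →
    (∑ z, f' (vs β) z = ka - 1) →
    (∑ z, g' (vs β) z = kb + 1) →
    (∀ p q, p ∈ l ∨ q ∈ l → f' p q = f p q ∧ g' p q = g p q) →
    ∃ f'' g'', IsFlow f'' (ka - 1) ∧ IsFlow g'' (kb + 1) ∧
      ∀ u w, f'' u w + g'' u w = f u w + g u w := by
  intro l
  induction l with
  | nil =>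
    intro v f' g' _ hlast _ _ hvt _ _ _ _ _ _ _ _ _ _ _ _
    simp only [List.getLast?_singleton, Option.some_inj] at hlast
    exact absurd hlast hvt
  | cons x rest ih =>
    intro v f' g' hchain hlast hnd hvs hvt hsf hsg hcf hcg hsum hconsf hconsg himbf himbg
      hvalf hvalg hfresh
    obtain ⟨hstep, hchain'⟩ := List.chain_cons.1 hchain
    have hndtail : (x :: rest).Nodup := hnd.of_cons
    have hvnotin : v ∉ x :: rest := (List.nodup_cons.1 hnd).1
    have hvx : v ≠ x := fun h => hvnotin (h ▸ (List.mem_cons_self : x ∈ x :: rest))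
    have hxvs : x ≠ vs β := fun h => hvs (h ▸ List.mem_cons_of_mem v ((List.mem_cons_self : x ∈ x :: rest)))
    have hvvs : v ≠ vs β := fun h => hvs (h ▸ (List.mem_cons_self : v ∈ v :: x :: rest))
    have hvsrest : vs β ∉ x :: rest := fun h => hvs (List.mem_cons_of_mem v h)
    have hxnotrest : x ∉ rest := (List.nodup_cons.1 hndtail).1
    have hvnotrest : v ∉ rest := fun h => hvnotin (List.mem_cons_of_mem x h)
    have hlast' : (x :: rest).getLast? = some (vt β) := by
      rw [List.getLast?_cons_cons] at hlast
      exact hlast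
    have hfx : f' v x = f v x ∧ g' v x = g v x :=
      hfresh v x (Or.inr ((List.mem_cons_self : x ∈ x :: rest)))
    have hxf : f' x v = f x v ∧ g' x v = g x v :=
      hfresh x v (Or.inl ((List.mem_cons_self : x ∈ x :: rest)))
    rcases hstep with hfw | hbw
    · -- forward step on edge (v, x)
      have hpos : 1 ≤ f v x := by omega
      have hal : allowed v x := hforig.supp _ _ (by omega)
      set f'' := edgeUpd f' v x (f' v x - 1) with hf''def
      set g'' := edgeUpd g' v x (g' v x + 1) with hg''def
      have hf'pos : 1 ≤ f' v x := by omega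
      have hsf'' : ∀ u w, f'' u w ≠ 0 → allowed u w := by
        intro u w h
        by_cases h' : u = v ∧ w = x
        · obtain ⟨rfl, rfl⟩ := h'; exact hal
        · rw [hf''def, edgeUpd_ne _ _ _ _ h'] at h; exact hsf _ _ h
      have hsg'' : ∀ u w, g'' u w ≠ 0 → allowed u w := by
        intro u w h
        by_cases h' : u = v ∧ w = x
        · obtain ⟨rfl, rfl⟩ := h'; exact hal
        · rw [hg''def, edgeUpd_ne _ _ _ _ h'] at h; exact hsg _ _ h
      have hcf'' : ∀ a : β, f'' (vin a) (vout a) ≤ 1 := by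
        intro a
        by_cases h' : (vin a : FV β) = v ∧ (vout a : FV β) = x
        · rw [hf''def, ← h'.1, ← h'.2, edgeUpd_same]
          have := hcf a; omega
        · rw [hf''def, edgeUpd_ne _ _ _ _ h']; exact hcf a
      have hcg'' : ∀ a : β, g'' (vin a) (vout a) ≤ 1 := by
        intro a
        by_cases h' : (vin a : FV β) = v ∧ (vout a : FV β) = x
        · obtain ⟨h1, h2⟩ := h'
          rw [hg''def, ← h1, ← h2, edgeUpd_same]
          have hc := hforig.cap a
          have hgx := hfx.2
          rw [← h1, ← h2] at hgx hfw
          omega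
        · rw [hg''def, edgeUpd_ne _ _ _ _ h']; exact hcg a
      have hsum'' : ∀ u w, f'' u w + g'' u w = f u w + g u w := by
        intro u w
        by_cases h' : u = v ∧ w = x
        · obtain ⟨h1, h2⟩ := h'
          rw [hf''def, hg''def, h1, h2, edgeUpd_same, edgeUpd_same]
          have := hsum v x
          omega
        · rw [hf''def, hg''def, edgeUpd_ne _ _ _ _ h', edgeUpd_ne _ _ _ _ h']
          exact hsum u w
      have houtvF : ∑ z, f'' v z + 1 = ∑ z, f' v z := by
        have h := sum_out_edgeUpd_eq f' v x (f' v x - 1)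
        rw [← hf''def] at h
        omega
      have hinxF : ∑ u, f'' u x + 1 = ∑ u, f' u x := by
        have h := sum_in_edgeUpd_eq f' v x (f' v x - 1)
        rw [← hf''def] at h
        omega
      have houtvG : ∑ z, g'' v z = ∑ z, g' v z + 1 := by
        have h := sum_out_edgeUpd_eq g' v x (g' v x + 1)
        rw [← hg''def] at h
        omega
      have hinxG : ∑ u, g'' u x = ∑ u, g' u x + 1 := by
        have h := sum_in_edgeUpd_eq g' v x (g' v x + 1)
        rw [← hg''def] at h
        omega
      have houtF_ne : ∀ w, w ≠ v → ∑ z, f'' w z = ∑ z, f' w z := by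
        intro w hw; rw [hf''def]; exact sum_out_edgeUpd_ne f' v x _ hw
      have hinF_ne : ∀ w, w ≠ x → ∑ u, f'' u w = ∑ u, f' u w := by
        intro w hw; rw [hf''def]; exact sum_in_edgeUpd_ne f' v x _ hw
      have houtG_ne : ∀ w, w ≠ v → ∑ z, g'' w z = ∑ z, g' w z := by
        intro w hw; rw [hg''def]; exact sum_out_edgeUpd_ne g' v x _ hw
      have hinG_ne : ∀ w, w ≠ x → ∑ u, g'' u w = ∑ u, g' u w := by
        intro w hw; rw [hg''def]; exact sum_in_edgeUpd_ne g' v x _ hw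
      rcases eq_or_ne x (vt β) with rfl | hxt
      · refine ⟨f'', g'', ⟨hsf'', hcf'', ?_, ?_⟩, ⟨hsg'', hcg'', ?_, ?_⟩, hsum''⟩
        · intro w hwvs hwvt
          rcases eq_or_ne w v with rfl | hwv
          · rw [hinF_ne w hwvt]
            omega
          · rw [hinF_ne w hwvt, houtF_ne w hwv]
            exact hconsf w hwvs hwvt hwv
        · rw [houtF_ne _ (Ne.symm hvvs)]
          exact hvalf
        · intro w hwvs hwvt
          rcases eq_or_ne w v with rfl | hwv
          · rw [hinG_ne w hwvt]
            omega
          · rw [hinG_ne w hwvt, houtG_ne w hwv]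
            exact hconsg w hwvs hwvt hwv
        · rw [houtG_ne _ (Ne.symm hvvs)]
          exact hvalg
      · have hconsfx : ∑ u, f' u x = ∑ z, f' x z := hconsf x hxvs hxt (Ne.symm hvx)
        have hconsgx : ∑ u, g' u x = ∑ z, g' x z := hconsg x hxvs hxt (Ne.symm hvx)
        refine ih x f'' g'' hchain' hlast' hndtail hvsrest hxt hsf'' hsg'' hcf'' hcg'' hsum''
          ?_ ?_ ?_ ?_ ?_ ?_ ?_
        · intro w hwvs hwvt hwx
          rcases eq_or_ne w v with rfl | hwv
          · rw [hinF_ne w hwx]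
            omega
          · rw [hinF_ne w hwx, houtF_ne w hwv]
            exact hconsf w hwvs hwvt hwv
        · intro w hwvs hwvt hwx
          rcases eq_or_ne w v with rfl | hwv
          · rw [hinG_ne w hwx]
            omega
          · rw [hinG_ne w hwx, houtG_ne w hwv]
            exact hconsg w hwvs hwvt hwv
        · rw [houtF_ne x (Ne.symm hvx)]
          omega
        · rw [houtG_ne x (Ne.symm hvx)]
          omega
        · rw [houtF_ne _ (Ne.symm hvvs)]
          exact hvalf
        · rw [houtG_ne _ (Ne.symm hvvs)]
          exact hvalg
        · intro p q hpq
          have hne : ¬(p = v ∧ q = x) := by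
            rintro ⟨rfl, rfl⟩
            rcases hpq with h | h
            · exact hvnotrest h
            · exact hxnotrest h
          rw [hf''def, hg''def, edgeUpd_ne _ _ _ _ hne, edgeUpd_ne _ _ _ _ hne]
          exact hfresh p q (hpq.imp (List.mem_cons_of_mem x) (List.mem_cons_of_mem x))
    · -- backward step on edge (x, v)
      have hpos : 1 ≤ g x v := by omega
      have hal : allowed x v := hgorig.supp _ _ (by omega)
      have hxt : x ≠ vt β := by
        intro h
        rw [h] at hbw
        have := hgorig.out_vt v
        omega
      set f'' := edgeUpd f' x v (f' x v + 1) with hf''def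
      set g'' := edgeUpd g' x v (g' x v - 1) with hg''def
      have hg'pos : 1 ≤ g' x v := by omega
      have hsf'' : ∀ u w, f'' u w ≠ 0 → allowed u w := by
        intro u w h
        by_cases h' : u = x ∧ w = v
        · obtain ⟨rfl, rfl⟩ := h'; exact hal
        · rw [hf''def, edgeUpd_ne _ _ _ _ h'] at h; exact hsf _ _ h
      have hsg'' : ∀ u w, g'' u w ≠ 0 → allowed u w := by
        intro u w h
        by_cases h' : u = x ∧ w = v
        · obtain ⟨rfl, rfl⟩ := h'; exact hal
        · rw [hg''def, edgeUpd_ne _ _ _ _ h'] at h; exact hsg _ _ h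
      have hcf'' : ∀ a : β, f'' (vin a) (vout a) ≤ 1 := by
        intro a
        by_cases h' : (vin a : FV β) = x ∧ (vout a : FV β) = v
        · obtain ⟨h1, h2⟩ := h'
          rw [hf''def, ← h1, ← h2, edgeUpd_same]
          have hc := hgorig.cap a
          have hfxv := hxf.1
          rw [← h1, ← h2] at hfxv hbw
          omega
        · rw [hf''def, edgeUpd_ne _ _ _ _ h']; exact hcf a
      have hcg'' : ∀ a : β, g'' (vin a) (vout a) ≤ 1 := by
        intro a
        by_cases h' : (vin a : FV β) = x ∧ (vout a : FV β) = v
        · rw [hg''def, ← h'.1, ← h'.2, edgeUpd_same]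
          have := hcg a; omega
        · rw [hg''def, edgeUpd_ne _ _ _ _ h']; exact hcg a
      have hsum'' : ∀ u w, f'' u w + g'' u w = f u w + g u w := by
        intro u w
        by_cases h' : u = x ∧ w = v
        · obtain ⟨h1, h2⟩ := h'
          rw [hf''def, hg''def, h1, h2, edgeUpd_same, edgeUpd_same]
          have := hsum x v
          omega
        · rw [hf''def, hg''def, edgeUpd_ne _ _ _ _ h', edgeUpd_ne _ _ _ _ h']
          exact hsum u w
      have houtxF : ∑ z, f'' x z = ∑ z, f' x z + 1 := by
        have h := sum_out_edgeUpd_eq f' x v (f' x v + 1)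
        rw [← hf''def] at h
        omega
      have hinvF : ∑ u, f'' u v = ∑ u, f' u v + 1 := by
        have h := sum_in_edgeUpd_eq f' x v (f' x v + 1)
        rw [← hf''def] at h
        omega
      have houtxG : ∑ z, g'' x z + 1 = ∑ z, g' x z := by
        have h := sum_out_edgeUpd_eq g' x v (g' x v - 1)
        rw [← hg''def] at h
        omega
      have hinvG : ∑ u, g'' u v + 1 = ∑ u, g' u v := by
        have h := sum_in_edgeUpd_eq g' x v (g' x v - 1)
        rw [← hg''def] at h
        omega
      have houtF_ne : ∀ w, w ≠ x → ∑ z, f'' w z = ∑ z, f' w z := by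
        intro w hw; rw [hf''def]; exact sum_out_edgeUpd_ne f' x v _ hw
      have hinF_ne : ∀ w, w ≠ v → ∑ u, f'' u w = ∑ u, f' u w := by
        intro w hw; rw [hf''def]; exact sum_in_edgeUpd_ne f' x v _ hw
      have houtG_ne : ∀ w, w ≠ x → ∑ z, g'' w z = ∑ z, g' w z := by
        intro w hw; rw [hg''def]; exact sum_out_edgeUpd_ne g' x v _ hw
      have hinG_ne : ∀ w, w ≠ v → ∑ u, g'' u w = ∑ u, g' u w := by
        intro w hw; rw [hg''def]; exact sum_in_edgeUpd_ne g' x v _ hw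
      have hconsfx : ∑ u, f' u x = ∑ z, f' x z := hconsf x hxvs hxt (Ne.symm hvx)
      have hconsgx : ∑ u, g' u x = ∑ z, g' x z := hconsg x hxvs hxt (Ne.symm hvx)
      refine ih x f'' g'' hchain' hlast' hndtail hvsrest hxt hsf'' hsg'' hcf'' hcg'' hsum''
        ?_ ?_ ?_ ?_ ?_ ?_ ?_
      · intro w hwvs hwvt hwx
        rcases eq_or_ne w v with rfl | hwv
        · rw [houtF_ne w hwx, hinvF]
          omega
        · rw [hinF_ne w hwv, houtF_ne w hwx]
          exact hconsf w hwvs hwvt hwv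
      · intro w hwvs hwvt hwx
        rcases eq_or_ne w v with rfl | hwv
        · rw [houtG_ne w hwx]
          omega
        · rw [hinG_ne w hwv, houtG_ne w hwx]
          exact hconsg w hwvs hwvt hwv
      · rw [hinF_ne x (Ne.symm hvx)]
        omega
      · have hgout : g' x v ≤ ∑ z, g' x z :=
          Finset.single_le_sum (f := fun z => g' x z) (fun z _ => Nat.zero_le _)
            (Finset.mem_univ v)
        rw [hinG_ne x (Ne.symm hvx)]
        omega
      · rw [houtF_ne _ (Ne.symm hxvs)]
        exact hvalf
      · rw [houtG_ne _ (Ne.symm hxvs)]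
        exact hvalg
      · intro p q hpq
        have hne : ¬(p = x ∧ q = v) := by
          rintro ⟨rfl, rfl⟩
          rcases hpq with h | h
          · exact hxnotrest h
          · exact hvnotrest h
        rw [hf''def, hg''def, edgeUpd_ne _ _ _ _ hne, edgeUpd_ne _ _ _ _ hne]
        exact hfresh p q (hpq.imp (List.mem_cons_of_mem x) (List.mem_cons_of_mem x))

end Augment2



section Augment3
variable {β : Type*} [PartialOrder β] [Fintype β] [DecidableEq β]

lemma augment {f g : FV β → FV β → ℕ} {ka kb : ℕ} (hf : IsFlow f ka) (hg : IsFlow g kb)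
    (hlt : kb < ka) :
    ∃ f' g', IsFlow f' (ka - 1) ∧ IsFlow g' (kb + 1) ∧
      ∀ u w, f' u w + g' u w = f u w + g u w := by
  classical
  have hreach := reach_vt hf hg hlt
  obtain ⟨l₀, hchain₀, hlast₀⟩ := List.exists_isChain_cons_of_relationReflTransGen hreach
  have hlast₀' : (vs β :: l₀).getLast? = some (vt β) := by
    rw [List.getLast?_eq_getLast (by simp), hlast₀]
  obtain ⟨l, hchain, hlastq, hnd⟩ := exists_nodup_chain l₀ (vs β) hchain₀
  rw [hlast₀'] at hlastq
  cases l with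
  | nil =>
    simp only [List.getLast?_singleton, Option.some_inj] at hlastq
    exact absurd hlastq (vs_ne_vt)
  | cons x rest =>
    obtain ⟨hstep, hchain'⟩ := List.chain_cons.1 hchain
    rcases hstep with hfw | hbw
    swap
    · -- backward first step impossible
      exfalso
      have := hg.into_vs x
      omega
    have hpos : 1 ≤ f (vs β) x := by omega
    have hal : allowed (vs β) x := hf.supp _ _ (by omega)
    have hndtail : (x :: rest).Nodup := hnd.of_cons
    have hvsnotin : vs β ∉ x :: rest := (List.nodup_cons.1 hnd).1
    have hvsx : vs β ≠ x := fun h => hvsnotin (h ▸ (List.mem_cons_self : x ∈ x :: rest))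
    have hxnotrest : x ∉ rest := (List.nodup_cons.1 hndtail).1
    have hvsnotrest : vs β ∉ rest := fun h => hvsnotin (List.mem_cons_of_mem x h)
    have hlast' : (x :: rest).getLast? = some (vt β) := by
      rw [List.getLast?_cons_cons] at hlastq
      exact hlastq
    set f' := edgeUpd f (vs β) x (f (vs β) x - 1) with hf'def
    set g' := edgeUpd g (vs β) x (g (vs β) x + 1) with hg'def
    have hsf' : ∀ u w, f' u w ≠ 0 → allowed u w := by
      intro u w h
      by_cases h' : u = vs β ∧ w = x
      · obtain ⟨rfl, rfl⟩ := h'; exact hal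
      · rw [hf'def, edgeUpd_ne _ _ _ _ h'] at h; exact hf.supp _ _ h
    have hsg' : ∀ u w, g' u w ≠ 0 → allowed u w := by
      intro u w h
      by_cases h' : u = vs β ∧ w = x
      · obtain ⟨rfl, rfl⟩ := h'; exact hal
      · rw [hg'def, edgeUpd_ne _ _ _ _ h'] at h; exact hg.supp _ _ h
    have hcf' : ∀ a : β, f' (vin a) (vout a) ≤ 1 := by
      intro a
      rw [hf'def, edgeUpd_ne _ _ _ _ (fun h => (vin_ne_vs a) h.1)]
      exact hf.cap a
    have hcg' : ∀ a : β, g' (vin a) (vout a) ≤ 1 := by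
      intro a
      rw [hg'def, edgeUpd_ne _ _ _ _ (fun h => (vin_ne_vs a) h.1)]
      exact hg.cap a
    have hsum' : ∀ u w, f' u w + g' u w = f u w + g u w := by
      intro u w
      by_cases h' : u = vs β ∧ w = x
      · obtain ⟨h1, h2⟩ := h'
        rw [hf'def, hg'def, h1, h2, edgeUpd_same, edgeUpd_same]
        omega
      · rw [hf'def, hg'def, edgeUpd_ne _ _ _ _ h', edgeUpd_ne _ _ _ _ h']
    have houtsF : ∑ z, f' (vs β) z + 1 = ∑ z, f (vs β) z := by
      have h := sum_out_edgeUpd_eq f (vs β) x (f (vs β) x - 1)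
      rw [← hf'def] at h
      omega
    have hinxF : ∑ u, f' u x + 1 = ∑ u, f u x := by
      have h := sum_in_edgeUpd_eq f (vs β) x (f (vs β) x - 1)
      rw [← hf'def] at h
      omega
    have houtsG : ∑ z, g' (vs β) z = ∑ z, g (vs β) z + 1 := by
      have h := sum_out_edgeUpd_eq g (vs β) x (g (vs β) x + 1)
      rw [← hg'def] at h
      omega
    have hinxG : ∑ u, g' u x = ∑ u, g u x + 1 := by
      have h := sum_in_edgeUpd_eq g (vs β) x (g (vs β) x + 1)
      rw [← hg'def] at h
      omega
    have houtF_ne : ∀ w, w ≠ vs β → ∑ z, f' w z = ∑ z, f w z := by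
      intro w hw; rw [hf'def]; exact sum_out_edgeUpd_ne f (vs β) x _ hw
    have hinF_ne : ∀ w, w ≠ x → ∑ u, f' u w = ∑ u, f u w := by
      intro w hw; rw [hf'def]; exact sum_in_edgeUpd_ne f (vs β) x _ hw
    have houtG_ne : ∀ w, w ≠ vs β → ∑ z, g' w z = ∑ z, g w z := by
      intro w hw; rw [hg'def]; exact sum_out_edgeUpd_ne g (vs β) x _ hw
    have hinG_ne : ∀ w, w ≠ x → ∑ u, g' u w = ∑ u, g u w := by
      intro w hw; rw [hg'def]; exact sum_in_edgeUpd_ne g (vs β) x _ hw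
    have hvalf' : ∑ z, f' (vs β) z = ka - 1 := by
      have := hf.val
      omega
    have hvalg' : ∑ z, g' (vs β) z = kb + 1 := by
      rw [houtsG, hg.val]
    rcases eq_or_ne x (vt β) with rfl | hxt
    · -- single-edge path s → t
      refine ⟨f', g', ⟨hsf', hcf', ?_, hvalf'⟩, ⟨hsg', hcg', ?_, hvalg'⟩, hsum'⟩
      · intro w hwvs hwvt
        rw [hinF_ne w hwvt, houtF_ne w hwvs]
        exact hf.cons w hwvs hwvt
      · intro w hwvs hwvt
        rw [hinG_ne w hwvt, houtG_ne w hwvs]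
        exact hg.cons w hwvs hwvt
    · refine aug_rec f g ka kb hf hg rest x f' g' hchain' hlast' hndtail hvsnotin hxt
        hsf' hsg' hcf' hcg' hsum' ?_ ?_ ?_ ?_ hvalf' hvalg' ?_
      · intro w hwvs hwvt hwx
        rw [hinF_ne w hwx, houtF_ne w hwvs]
        exact hf.cons w hwvs hwvt
      · intro w hwvs hwvt hwx
        rw [hinG_ne w hwx, houtG_ne w hwvs]
        exact hg.cons w hwvs hwvt
      · rw [houtF_ne x (Ne.symm hvsx)]
        have := hf.cons x (Ne.symm hvsx) hxt
        omega
      · rw [houtG_ne x (Ne.symm hvsx)]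
        have := hg.cons x (Ne.symm hvsx) hxt
        omega
      · intro p q hpq
        have hne : ¬(p = vs β ∧ q = x) := by
          rintro ⟨rfl, rfl⟩
          rcases hpq with h | h
          · exact hvsnotrest h
          · exact hxnotrest h
        rw [hf'def, hg'def, edgeUpd_ne _ _ _ _ hne, edgeUpd_ne _ _ _ _ hne]
        exact ⟨rfl, rfl⟩

/-- Concavity of the Greene chain numbers. -/
lemma cMax_concave (β : Type*) [PartialOrder β] [Fintype β] [DecidableEq β]
    {k : ℕ} (hk : 1 ≤ k) :
    cMax β (k + 1) + cMax β (k - 1) ≤ 2 * cMax β k := by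
  classical
  obtain ⟨F, hFch, hFdis, hFcard⟩ := cMax_mem β (k + 1)
  obtain ⟨G, hGch, hGdis, hGcard⟩ := cMax_mem β (k - 1)
  obtain ⟨hfF, hcovF⟩ := family_isFlow F hFch hFdis
  obtain ⟨hfG, hcovG⟩ := family_isFlow G hGch hGdis
  obtain ⟨f', g', hf', hg', hsum⟩ := augment hfF hfG (by omega)
  have hf'k : IsFlow f' k := by rwa [Nat.add_sub_cancel] at hf'
  have hg'k : IsFlow g' k := by rwa [Nat.sub_add_cancel hk] at hg'
  obtain ⟨F', hF'ch, hF'dis, hF'card, -⟩ := flow_to_chains f' hf'k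
  obtain ⟨G', hG'ch, hG'dis, hG'card, -⟩ := flow_to_chains g' hg'k
  have h1 : coverage f' ≤ cMax β k := by
    rw [← hF'card]
    exact le_cMax β ⟨F', hF'ch, hF'dis, rfl⟩
  have h2 : coverage g' ≤ cMax β k := by
    rw [← hG'card]
    exact le_cMax β ⟨G', hG'ch, hG'dis, rfl⟩
  have hcov : coverage f' + coverage g' = coverage (fun u v => ∑ i, chainFlow (F i) u v)
      + coverage (fun u v => ∑ i, chainFlow (G i) u v) := by
    unfold coverage
    rw [← Finset.sum_add_distrib, ← Finset.sum_add_distrib]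
    exact Finset.sum_congr rfl fun a _ => hsum _ _
  rw [hFcard, hGcard, ← hcovF, ← hcovG]
  omega

end Augment3




section LamLemmas
variable (β : Type*) [PartialOrder β] [Fintype β] [DecidableEq β]

lemma lam_succ_le {k : ℕ} (hk : 1 ≤ k) : lam β (k + 1) ≤ lam β k := by
  have hconc := cMax_concave β hk
  have m1 := cMax_mono β (show k - 1 ≤ k by omega)
  have m2 := cMax_mono β (show k ≤ k + 1 by omega)
  unfold lam
  simp only [Nat.add_sub_cancel]
  omega

lemma lam_antitone {j k : ℕ} (hj : 1 ≤ j) (hjk : j ≤ k) : lam β k ≤ lam β j := by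
  induction k with
  | zero => omega
  | succ k ih =>
    rcases eq_or_lt_of_le hjk with heq | hlt
    · rw [heq]
    · have hk : 1 ≤ k := by omega
      exact le_trans (lam_succ_le β hk) (ih (by omega))

end LamLemmas

lemma telescope {c c' : ℕ → ℕ} {y : ℕ} (hy : 1 ≤ y) (hc0 : c 0 = 0) (hc'0 : c' 0 = 0)
    (hmono : ∀ a b, a ≤ b → c a ≤ c b) (hmono' : ∀ a b, a ≤ b → c' a ≤ c' b)
    (hlam : ∀ i, c' i - c' (i - 1) = (c i - c (i - 1)) - (if i = y then 1 else 0))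
    (hpos : 1 ≤ c y - c (y - 1)) :
    ∀ m, c' m = c m - (if y ≤ m then 1 else 0) := by
  intro m
  induction m with
  | zero => rw [hc0, hc'0, if_neg (by omega)]
  | succ m ih =>
    have h1 := hlam (m + 1)
    rw [Nat.add_sub_cancel] at h1
    have h2 := hmono m (m + 1) (by omega)
    have h3 := hmono' m (m + 1) (by omega)
    by_cases hym : m + 1 = y
    · rw [if_pos hym] at h1
      rw [if_pos (by omega)]
      rw [if_neg (by omega)] at ih
      have h5 := hmono (y - 1) y (by omega)
      have h6 : y - 1 = m := by omega
      rw [h6] at h5 hpos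
      rw [← hym] at hpos
      omega
    · rw [if_neg hym] at h1
      by_cases hle : y ≤ m
      · rw [if_pos hle] at ih
        rw [if_pos (by omega)]
        have h4 := hmono y m hle
        have h5 := hmono (y - 1) y (by omega)
        omega
      · rw [if_neg hle] at ih
        rw [if_neg (by omega)]
        omega

section Transfer
variable {α : Type*} [PartialOrder α] [Fintype α] [DecidableEq α]

lemma chain_map_val {P : α → Prop} {s : Finset {x // P x}}
    (h : IsChain (· ≤ ·) (↑s : Set {x // P x})) :
    IsChain (· ≤ ·) (↑(s.map (Function.Embedding.subtype P)) : Set α) := by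
  intro x hx y hy hne
  simp only [Finset.coe_map, Set.mem_image, Finset.mem_coe,
    Function.Embedding.coe_subtype] at hx hy
  obtain ⟨a, ha, rfl⟩ := hx
  obtain ⟨b, hb, rfl⟩ := hy
  have hab : a ≠ b := fun h' => hne (by rw [h'])
  rcases h ha hb hab with h' | h'
  · exact Or.inl h'
  · exact Or.inr h'

lemma map_biUnion_emb {γ δ : Type*} [DecidableEq γ] [DecidableEq δ] {n : ℕ}
    (f : Fin n → Finset γ) (e : γ ↪ δ) :
    Finset.univ.biUnion (fun i => (f i).map e) = (Finset.univ.biUnion f).map e := by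
  ext x
  simp only [Finset.mem_biUnion, Finset.mem_univ, true_and, Finset.mem_map]
  constructor
  · rintro ⟨i, a, ha, rfl⟩
    exact ⟨a, ⟨i, ha⟩, rfl⟩
  · rintro ⟨a, ⟨i, ha⟩, rfl⟩
    exact ⟨i, a, ha, rfl⟩

lemma disjoint_map_emb {γ δ : Type*} [DecidableEq γ] [DecidableEq δ] {s t : Finset γ}
    (e : γ ↪ δ) (h : Disjoint s t) : Disjoint (s.map e) (t.map e) := by
  rw [Finset.disjoint_left] at h ⊢
  intro x hx hx'
  rw [Finset.mem_map] at hx hx'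
  obtain ⟨a, ha, rfl⟩ := hx
  obtain ⟨b, hb, hba⟩ := hx'
  have : b = a := e.injective hba
  exact h ha (this ▸ hb)

end Transfer


theorem gansner_cover_box_rule
    (α : Type*) [PartialOrder α] [Fintype α] [DecidableEq α]
    (p₁ p₂ : α)
    (h₁ : ∀ x : α, p₁ ≤ x → x = p₁)
    (h₂ : ∀ x : α, x ≠ p₁ → p₂ ≤ x → x = p₂)
    (hcov : p₂ ⋖ p₁)
    (yB yA : ℕ) (hyB : 1 ≤ yB) (hyA : 1 ≤ yA)
    (hBpos : 1 ≤ lam α yB) (hApos : 1 ≤ lam {x : α // x ≠ p₁} yA)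
    (hB : ∀ i : ℕ, lam {x : α // x ≠ p₁} i = lam α i - (if i = yB then 1 else 0))
    (hA : ∀ i : ℕ, lam {x : α // x ≠ p₁ ∧ x ≠ p₂} i
        = lam {x : α // x ≠ p₁} i - (if i = yA then 1 else 0)) :
    lam {x : α // x ≠ p₁} yA < lam α yB := by
  have hp2ne : p₂ ≠ p₁ := (hcov.lt).ne
  rcases lt_trichotomy yA yB with hlt | heq | hgt
  · -- yA < yB : impossible
    exfalso
    have tele1 := telescope (c := cMax α) (c' := cMax {x : α // x ≠ p₁}) hyB
      (cMax_zero α) (cMax_zero _) (fun a b h => cMax_mono α h) (fun a b h => cMax_mono _ h)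
      (fun i => hB i) hBpos
    have tele2 := telescope (c := cMax {x : α // x ≠ p₁})
      (c' := cMax {x : α // x ≠ p₁ ∧ x ≠ p₂}) hyA
      (cMax_zero _) (cMax_zero _) (fun a b h => cMax_mono _ h) (fun a b h => cMax_mono _ h)
      (fun i => hA i) hApos
    have h1 : cMax {x : α // x ≠ p₁} yA = cMax α yA := by
      have := tele1 yA
      rw [if_neg (by omega)] at this
      omega
    have h2 : cMax {x : α // x ≠ p₁ ∧ x ≠ p₂} yA = cMax {x : α // x ≠ p₁} yA - 1 := by
      have := tele2 yA
      rwa [if_pos (le_refl yA)] at this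
    have h3 : 1 ≤ cMax {x : α // x ≠ p₁} yA :=
      le_trans hApos (Nat.sub_le _ _)
    obtain ⟨f, hch, hdis, hcard⟩ := cMax_mem {x : α // x ≠ p₁} yA
    by_cases hmem : (⟨p₂, hp2ne⟩ : {x : α // x ≠ p₁}) ∈ Finset.univ.biUnion f
    · -- p₂ is covered: extend its chain by p₁ in α
      obtain ⟨j, -, hj⟩ := Finset.mem_biUnion.1 hmem
      set e1 : {x : α // x ≠ p₁} ↪ α := Function.Embedding.subtype _ with he1
      set F : Fin yA → Finset α :=
        fun i => if i = j then insert p₁ ((f i).map e1) else (f i).map e1 with hF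
      have hp1notmap : ∀ i, p₁ ∉ (f i).map e1 := by
        intro i hmem'
        simp only [Finset.mem_map, Function.Embedding.coe_subtype, he1] at hmem'
        obtain ⟨a, -, ha⟩ := hmem'
        exact a.2 ha
      have hFch : ∀ i, IsChain (· ≤ ·) (↑(F i) : Set α) := by
        intro i
        rw [hF]
        dsimp only
        split_ifs with hij
        · subst hij
          rw [Finset.coe_insert]
          refine (chain_map_val (hch i)).insert ?_
          intro x hx hne
          simp only [Finset.coe_map, Set.mem_image, Finset.mem_coe,
            Function.Embedding.coe_subtype, he1] at hx
          obtain ⟨a, ha, rfl⟩ := hx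
          rcases eq_or_ne a ⟨p₂, hp2ne⟩ with rfl | hane
          · exact Or.inr (hcov.lt.le)
          · rcases hch i ha hj hane with h' | h'
            · exact Or.inr (le_trans h' hcov.lt.le)
            · exact absurd (Subtype.ext (h₂ a.1 a.2 h')) hane
        · exact chain_map_val (hch i)
      have hFdis : Pairwise (Function.onFun Disjoint F) := by
        intro i k hik
        rw [hF]
        dsimp only [Function.onFun]
        have hbase := disjoint_map_emb e1 (hdis hik)
        split_ifs with hij hkj hkj
        · exact absurd (hij.trans hkj.symm) hik
        · exact Finset.disjoint_insert_left.2 ⟨hp1notmap k, hbase⟩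
        · exact Finset.disjoint_insert_right.2 ⟨hp1notmap i, hbase⟩
        · exact hbase
      have hp1notbig : p₁ ∉ (Finset.univ.biUnion f).map e1 := by
        intro hmem'
        simp only [Finset.mem_map, Function.Embedding.coe_subtype, he1] at hmem'
        obtain ⟨a, -, ha⟩ := hmem'
        exact a.2 ha
      have hUnion : Finset.univ.biUnion F = insert p₁ ((Finset.univ.biUnion f).map e1) := by
        ext x
        simp only [Finset.mem_biUnion, Finset.mem_univ, true_and, Finset.mem_insert]
        constructor
        · rintro ⟨i, hi⟩
          rw [hF] at hi
          dsimp only at hi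
          split_ifs at hi with hij
          · rcases Finset.mem_insert.1 hi with rfl | hi'
            · exact Or.inl rfl
            · refine Or.inr ?_
              rw [← map_biUnion_emb f e1]
              exact Finset.mem_biUnion.2 ⟨i, Finset.mem_univ i, hi'⟩
          · refine Or.inr ?_
            rw [← map_biUnion_emb f e1]
            exact Finset.mem_biUnion.2 ⟨i, Finset.mem_univ i, hi⟩
        · rintro (rfl | hx)
          · refine ⟨j, ?_⟩
            rw [hF]
            dsimp only
            rw [if_pos rfl]
            exact Finset.mem_insert_self _ _
          · rw [← map_biUnion_emb f e1] at hx
            obtain ⟨i, -, hi⟩ := Finset.mem_biUnion.1 hx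
            refine ⟨i, ?_⟩
            rw [hF]
            dsimp only
            split_ifs with hij
            · exact Finset.mem_insert_of_mem hi
            · exact hi
      have hcard2 : (Finset.univ.biUnion F).card = cMax {x : α // x ≠ p₁} yA + 1 := by
        rw [hUnion, Finset.card_insert_of_notMem hp1notbig, Finset.card_map, ← hcard]
      have hle := le_cMax α (k := yA) ⟨F, hFch, hFdis, rfl⟩
      rw [hcard2, h1] at hle
      omega
    · -- p₂ is not covered: the family lives in the double subtype
      set e1 : {x : α // x ≠ p₁} ↪ α := Function.Embedding.subtype _ with he1
      set e2 : {x : α // x ≠ p₁ ∧ x ≠ p₂} ↪ α := Function.Embedding.subtype _ with he2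
      set g : Fin yA → Finset {x : α // x ≠ p₁ ∧ x ≠ p₂} :=
        fun i => ((f i).map e1).subtype (fun x => x ≠ p₁ ∧ x ≠ p₂) with hg
      have hmemP2 : ∀ i, ∀ x ∈ (f i).map e1, x ≠ p₁ ∧ x ≠ p₂ := by
        intro i x hx
        simp only [Finset.mem_map, Function.Embedding.coe_subtype, he1] at hx
        obtain ⟨a, ha, rfl⟩ := hx
        refine ⟨a.2, ?_⟩
        intro hxp2
        have ha2 : a = (⟨p₂, hp2ne⟩ : {x : α // x ≠ p₁}) := Subtype.ext hxp2
        exact hmem (Finset.mem_biUnion.2 ⟨i, Finset.mem_univ i, ha2 ▸ ha⟩)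
      have hgmap : ∀ i, (g i).map e2 = (f i).map e1 := by
        intro i
        rw [hg]
        dsimp only
        rw [he2, Finset.subtype_map, Finset.filter_true_of_mem (hmemP2 i)]
      have hgch : ∀ i, IsChain (· ≤ ·) (↑(g i) : Set {x : α // x ≠ p₁ ∧ x ≠ p₂}) := by
        intro i x hx y hy hne
        have hx' : (x : α) ∈ (f i).map e1 := by
          rw [← hgmap i]
          exact Finset.mem_map_of_mem e2 hx
        have hy' : (y : α) ∈ (f i).map e1 := by
          rw [← hgmap i]
          exact Finset.mem_map_of_mem e2 hy
        have hne' : (x : α) ≠ (y : α) := fun h => hne (Subtype.ext h)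
        have hch' : IsChain (· ≤ ·) (↑((f i).map e1) : Set α) := chain_map_val (hch i)
        rcases hch' hx' hy' hne' with h' | h'
        · exact Or.inl h'
        · exact Or.inr h'
      have hgdis : Pairwise (Function.onFun Disjoint g) := by
        intro i k hik
        dsimp only [Function.onFun]
        rw [Finset.disjoint_left]
        intro x hx hx'
        have h1' : (x : α) ∈ (f i).map e1 := by
          rw [← hgmap i]; exact Finset.mem_map_of_mem e2 hx
        have h2' : (x : α) ∈ (f k).map e1 := by
          rw [← hgmap k]; exact Finset.mem_map_of_mem e2 hx'
        exact Finset.disjoint_left.1 (disjoint_map_emb e1 (hdis hik)) h1' h2'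
      have hgcard : (Finset.univ.biUnion g).card = cMax {x : α // x ≠ p₁} yA := by
        have e : (Finset.univ.biUnion g).map e2 = (Finset.univ.biUnion f).map e1 := by
          rw [← map_biUnion_emb g e2, ← map_biUnion_emb f e1]
          exact Finset.biUnion_congr rfl (fun i _ => hgmap i)
        have hc := congrArg Finset.card e
        rw [Finset.card_map, Finset.card_map] at hc
        rw [hc, ← hcard]
      have hle := le_cMax {x : α // x ≠ p₁ ∧ x ≠ p₂} (k := yA) ⟨g, hgch, hgdis, rfl⟩
      rw [hgcard] at hle
      omega
  · -- yA = yB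
    have hByB := hB yB
    rw [if_pos rfl] at hByB
    rw [heq, hByB]
    omega
  · -- yB < yA
    have hanti := lam_antitone {x : α // x ≠ p₁} hyB (le_of_lt hgt)
    have hByB := hB yB
    rw [if_pos rfl] at hByB
    omega
end
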